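/- arXiv:1706.06788 — 5 statements merged into one kernel-verified Lean document; each statement's English description precedes it below -/
import Mathlib

section
/- In a categorified entries-only cyclic operad, the parallel associator ϑ, defined for operations f ∈ C(X), g ∈ C(Y), h ∈ C(Z) with x ∈ X, x̄, y ∈ Y, ȳ ∈ Z by ϑ^{x,x̄;y,ȳ}_{f,g,h} = γ^{x̄,x}_{g, f ∘ h} ∘ β^{x̄,x;y,ȳ}_{g,f,h} ∘ (γ^{x,x̄}_{f,g} ∘ 1_h), is involutive: ϑ^{y,ȳ;x,x̄}_{f,h,g} ∘ ϑ^{x,x̄;y,ȳ}_{f,g,h} = 1_{(f ₓ∘_{x̄} g) ᵧ∘_{ȳ} h}. -/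
namespace CatCyclicOperad

/-- A categorified entries-only cyclic operad (Definition 2.1 of the paper), with strict
equivariance.  Operations are indexed by finite sets of entry names drawn from a fixed type
`V` of variables; `Hom` is presented heterogeneously (in the intended models morphisms only
exist between operations with the same, possibly differently presented, set of entries).
The fields record: the categories `C(X)`, the partial composition bifunctors `ₓ∘ᵧ`,
the commutator `γ`, the associator `β` (with its inverse), their naturality, and the
coherence conditions (β-pentagon), (βγ-hexagon), (βγ-decagon) and (γ-involution). -/
structure CECO (V : Type) [DecidableEq V] where
  Ob : Finset V → Type
  Hom : {S T : Finset V} → Ob S → Ob T → Type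
  vid : {S : Finset V} → (f : Ob S) → Hom f f
  vcomp : {S T U : Finset V} → {f : Ob S} → {g : Ob T} → {h : Ob U} →
    Hom g h → Hom f g → Hom f h
  vcomp_vid : ∀ {S T : Finset V} {f : Ob S} {g : Ob T} (φ : Hom f g), vcomp φ (vid f) = φ
  vid_vcomp : ∀ {S T : Finset V} {f : Ob S} {g : Ob T} (φ : Hom f g), vcomp (vid g) φ = φ
  vcomp_assoc : ∀ {S₁ S₂ S₃ S₄ : Finset V} {f₁ : Ob S₁} {f₂ : Ob S₂} {f₃ : Ob S₃} {f₄ : Ob S₄}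
    (φ : Hom f₃ f₄) (ψ : Hom f₂ f₃) (χ : Hom f₁ f₂),
    vcomp (vcomp φ ψ) χ = vcomp φ (vcomp ψ χ)
  /-- The partial composition `f ₓ∘ᵧ g` on operations. -/
  pc : {X Y : Finset V} → (x y : V) → x ∈ X → y ∈ Y →
    Disjoint (X.erase x) (Y.erase y) → Ob X → Ob Y → Ob (X.erase x ∪ Y.erase y)
  /-- The partial composition on morphisms (bifunctoriality data). -/
  pcH : {X X' Y Y' : Finset V} → (x y : V) →
    (hx : x ∈ X) → (hx' : x ∈ X') → (hy : y ∈ Y) → (hy' : y ∈ Y') →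
    (hd : Disjoint (X.erase x) (Y.erase y)) → (hd' : Disjoint (X'.erase x) (Y'.erase y)) →
    {f : Ob X} → {f' : Ob X'} → {g : Ob Y} → {g' : Ob Y'} →
    Hom f f' → Hom g g' → Hom (pc x y hx hy hd f g) (pc x y hx' hy' hd' f' g')
  pcH_vid : ∀ {X Y : Finset V} (x y : V) (hx : x ∈ X) (hy : y ∈ Y)
    (hd : Disjoint (X.erase x) (Y.erase y)) (f : Ob X) (g : Ob Y),
    pcH x y hx hx hy hy hd hd (vid f) (vid g) = vid (pc x y hx hy hd f g)
  pcH_vcomp : ∀ {X X' X'' Y Y' Y'' : Finset V} (x y : V)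
    (hx : x ∈ X) (hx' : x ∈ X') (hx'' : x ∈ X'') (hy : y ∈ Y) (hy' : y ∈ Y') (hy'' : y ∈ Y'')
    (hd : Disjoint (X.erase x) (Y.erase y)) (hd' : Disjoint (X'.erase x) (Y'.erase y))
    (hd'' : Disjoint (X''.erase x) (Y''.erase y))
    {f : Ob X} {f' : Ob X'} {f'' : Ob X''} {g : Ob Y} {g' : Ob Y'} {g'' : Ob Y''}
    (φ' : Hom f' f'') (φ : Hom f f') (ψ' : Hom g' g'') (ψ : Hom g g'),
    pcH x y hx hx'' hy hy'' hd hd'' (vcomp φ' φ) (vcomp ψ' ψ)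
      = vcomp (pcH x y hx' hx'' hy' hy'' hd' hd'' φ' ψ') (pcH x y hx hx' hy hy' hd hd' φ ψ)
  /-- The commutator isomorphism `γ`. -/
  gam : {X Y : Finset V} → (x y : V) → (hx : x ∈ X) → (hy : y ∈ Y) →
    (hd : Disjoint (X.erase x) (Y.erase y)) → (f : Ob X) → (g : Ob Y) →
    Hom (pc x y hx hy hd f g) (pc y x hy hx hd.symm g f)
  gam_natural : ∀ {X X' Y Y' : Finset V} (x y : V)
    (hx : x ∈ X) (hx' : x ∈ X') (hy : y ∈ Y) (hy' : y ∈ Y')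
    (hd : Disjoint (X.erase x) (Y.erase y)) (hd' : Disjoint (X'.erase x) (Y'.erase y))
    {f : Ob X} {f' : Ob X'} {g : Ob Y} {g' : Ob Y'} (φ : Hom f f') (ψ : Hom g g'),
    vcomp (gam x y hx' hy' hd' f' g') (pcH x y hx hx' hy hy' hd hd' φ ψ)
      = vcomp (pcH y x hy hy' hx hx' hd.symm hd'.symm ψ φ) (gam x y hx hy hd f g)
  /-- (γ-involution). -/
  gam_involution : ∀ {X Y : Finset V} (x y : V) (hx : x ∈ X) (hy : y ∈ Y)
    (hd : Disjoint (X.erase x) (Y.erase y)) (f : Ob X) (g : Ob Y),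
    vcomp (gam y x hy hx hd.symm g f) (gam x y hx hy hd f g) = vid (pc x y hx hy hd f g)
  /-- The associator isomorphism `β`. -/
  bet : {X Y Z : Finset V} → (x xb y yb : V) →
    (hx : x ∈ X) → (hxb : xb ∈ Y) → (hy : y ∈ Y) → (hyb : yb ∈ Z) →
    (d1 : Disjoint (X.erase x) (Y.erase xb)) →
    (hyU : y ∈ X.erase x ∪ Y.erase xb) →
    (d2 : Disjoint ((X.erase x ∪ Y.erase xb).erase y) (Z.erase yb)) →
    (d3 : Disjoint (Y.erase y) (Z.erase yb)) →
    (hxbU : xb ∈ Y.erase y ∪ Z.erase yb) →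
    (d4 : Disjoint (X.erase x) ((Y.erase y ∪ Z.erase yb).erase xb)) →
    (f : Ob X) → (g : Ob Y) → (h : Ob Z) →
    Hom (pc y yb hyU hyb d2 (pc x xb hx hxb d1 f g) h)
        (pc x xb hx hxbU d4 f (pc y yb hy hyb d3 g h))
  /-- The inverse of the associator. -/
  betInv : {X Y Z : Finset V} → (x xb y yb : V) →
    (hx : x ∈ X) → (hxb : xb ∈ Y) → (hy : y ∈ Y) → (hyb : yb ∈ Z) →
    (d1 : Disjoint (X.erase x) (Y.erase xb)) →
    (hyU : y ∈ X.erase x ∪ Y.erase xb) →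
    (d2 : Disjoint ((X.erase x ∪ Y.erase xb).erase y) (Z.erase yb)) →
    (d3 : Disjoint (Y.erase y) (Z.erase yb)) →
    (hxbU : xb ∈ Y.erase y ∪ Z.erase yb) →
    (d4 : Disjoint (X.erase x) ((Y.erase y ∪ Z.erase yb).erase xb)) →
    (f : Ob X) → (g : Ob Y) → (h : Ob Z) →
    Hom (pc x xb hx hxbU d4 f (pc y yb hy hyb d3 g h))
        (pc y yb hyU hyb d2 (pc x xb hx hxb d1 f g) h)
  betInv_bet : ∀ {X Y Z : Finset V} (x xb y yb : V)
    (hx : x ∈ X) (hxb : xb ∈ Y) (hy : y ∈ Y) (hyb : yb ∈ Z)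
    (d1 : Disjoint (X.erase x) (Y.erase xb))
    (hyU : y ∈ X.erase x ∪ Y.erase xb)
    (d2 : Disjoint ((X.erase x ∪ Y.erase xb).erase y) (Z.erase yb))
    (d3 : Disjoint (Y.erase y) (Z.erase yb))
    (hxbU : xb ∈ Y.erase y ∪ Z.erase yb)
    (d4 : Disjoint (X.erase x) ((Y.erase y ∪ Z.erase yb).erase xb))
    (f : Ob X) (g : Ob Y) (h : Ob Z),
    vcomp (betInv x xb y yb hx hxb hy hyb d1 hyU d2 d3 hxbU d4 f g h)
          (bet x xb y yb hx hxb hy hyb d1 hyU d2 d3 hxbU d4 f g h)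
      = vid (pc y yb hyU hyb d2 (pc x xb hx hxb d1 f g) h)
  bet_betInv : ∀ {X Y Z : Finset V} (x xb y yb : V)
    (hx : x ∈ X) (hxb : xb ∈ Y) (hy : y ∈ Y) (hyb : yb ∈ Z)
    (d1 : Disjoint (X.erase x) (Y.erase xb))
    (hyU : y ∈ X.erase x ∪ Y.erase xb)
    (d2 : Disjoint ((X.erase x ∪ Y.erase xb).erase y) (Z.erase yb))
    (d3 : Disjoint (Y.erase y) (Z.erase yb))
    (hxbU : xb ∈ Y.erase y ∪ Z.erase yb)
    (d4 : Disjoint (X.erase x) ((Y.erase y ∪ Z.erase yb).erase xb))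
    (f : Ob X) (g : Ob Y) (h : Ob Z),
    vcomp (bet x xb y yb hx hxb hy hyb d1 hyU d2 d3 hxbU d4 f g h)
          (betInv x xb y yb hx hxb hy hyb d1 hyU d2 d3 hxbU d4 f g h)
      = vid (pc x xb hx hxbU d4 f (pc y yb hy hyb d3 g h))
  bet_natural : ∀ {X X' Y Y' Z Z' : Finset V} (x xb y yb : V)
    (hx : x ∈ X) (hx' : x ∈ X') (hxb : xb ∈ Y) (hxb' : xb ∈ Y')
    (hy : y ∈ Y) (hy' : y ∈ Y') (hyb : yb ∈ Z) (hyb' : yb ∈ Z')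
    (d1 : Disjoint (X.erase x) (Y.erase xb)) (d1' : Disjoint (X'.erase x) (Y'.erase xb))
    (hyU : y ∈ X.erase x ∪ Y.erase xb) (hyU' : y ∈ X'.erase x ∪ Y'.erase xb)
    (d2 : Disjoint ((X.erase x ∪ Y.erase xb).erase y) (Z.erase yb))
    (d2' : Disjoint ((X'.erase x ∪ Y'.erase xb).erase y) (Z'.erase yb))
    (d3 : Disjoint (Y.erase y) (Z.erase yb)) (d3' : Disjoint (Y'.erase y) (Z'.erase yb))
    (hxbU : xb ∈ Y.erase y ∪ Z.erase yb) (hxbU' : xb ∈ Y'.erase y ∪ Z'.erase yb)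
    (d4 : Disjoint (X.erase x) ((Y.erase y ∪ Z.erase yb).erase xb))
    (d4' : Disjoint (X'.erase x) ((Y'.erase y ∪ Z'.erase yb).erase xb))
    {f : Ob X} {f' : Ob X'} {g : Ob Y} {g' : Ob Y'} {h : Ob Z} {h' : Ob Z'}
    (φ : Hom f f') (ψ : Hom g g') (χ : Hom h h'),
    vcomp (bet x xb y yb hx' hxb' hy' hyb' d1' hyU' d2' d3' hxbU' d4' f' g' h')
          (pcH y yb hyU hyU' hyb hyb' d2 d2' (pcH x xb hx hx' hxb hxb' d1 d1' φ ψ) χ)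
    = vcomp (pcH x xb hx hx' hxbU hxbU' d4 d4' φ (pcH y yb hy hy' hyb hyb' d3 d3' ψ χ))
            (bet x xb y yb hx hxb hy hyb d1 hyU d2 d3 hxbU d4 f g h)
  /-- (β-pentagon). -/
  pentagon : ∀ {X Y Z W : Finset V} (x xb y yb z zb : V)
    (hx : x ∈ X) (hxb : xb ∈ Y) (hy : y ∈ Y) (hyb : yb ∈ Z) (hz : z ∈ Z) (hzb : zb ∈ W)
    (dfg : Disjoint (X.erase x) (Y.erase xb))
    (dgh : Disjoint (Y.erase y) (Z.erase yb))
    (dhk : Disjoint (Z.erase z) (W.erase zb))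
    (hyA : y ∈ X.erase x ∪ Y.erase xb)
    (dP2 : Disjoint ((X.erase x ∪ Y.erase xb).erase y) (Z.erase yb))
    (hzB : z ∈ (X.erase x ∪ Y.erase xb).erase y ∪ Z.erase yb)
    (dL : Disjoint (((X.erase x ∪ Y.erase xb).erase y ∪ Z.erase yb).erase z) (W.erase zb))
    (hxbC : xb ∈ Y.erase y ∪ Z.erase yb)
    (dQ2 : Disjoint (X.erase x) ((Y.erase y ∪ Z.erase yb).erase xb))
    (hzC : z ∈ Y.erase y ∪ Z.erase yb)
    (dN : Disjoint ((Y.erase y ∪ Z.erase yb).erase z) (W.erase zb))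
    (hybE : yb ∈ Z.erase z ∪ W.erase zb)
    (dR2 : Disjoint (Y.erase y) ((Z.erase z ∪ W.erase zb).erase yb))
    (hxbF : xb ∈ Y.erase y ∪ (Z.erase z ∪ W.erase zb).erase yb)
    (dF : Disjoint (X.erase x) ((Y.erase y ∪ (Z.erase z ∪ W.erase zb).erase yb).erase xb))
    (hzD : z ∈ X.erase x ∪ (Y.erase y ∪ Z.erase yb).erase xb)
    (dM : Disjoint ((X.erase x ∪ (Y.erase y ∪ Z.erase yb).erase xb).erase z) (W.erase zb))
    (hxbCW : xb ∈ (Y.erase y ∪ Z.erase yb).erase z ∪ W.erase zb)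
    (dG : Disjoint (X.erase x) (((Y.erase y ∪ Z.erase yb).erase z ∪ W.erase zb).erase xb))
    (dO : Disjoint ((X.erase x ∪ Y.erase xb).erase y) ((Z.erase z ∪ W.erase zb).erase yb))
    (f : Ob X) (g : Ob Y) (h : Ob Z) (k : Ob W),
    vcomp (pcH x xb hx hx hxbCW hxbF dG dF (vid f)
            (bet y yb z zb hy hyb hz hzb dgh hzC dN dhk hybE dR2 g h k))
      (vcomp (bet x xb z zb hx hxbC hzC hzb dQ2 hzD dM dN hxbCW dG
                f (pc y yb hy hyb dgh g h) k)
        (pcH z zb hzB hzD hzb hzb dL dM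
          (bet x xb y yb hx hxb hy hyb dfg hyA dP2 dgh hxbC dQ2 f g h) (vid k)))
    = vcomp (bet x xb y yb hx hxb hy hybE dfg hyA dO dR2 hxbF dF
              f g (pc z zb hz hzb dhk h k))
        (bet y yb z zb hyA hyb hz hzb dP2 hzB dL dhk hybE dO
          (pc x xb hx hxb dfg f g) h k)
  /-- (βγ-hexagon). -/
  hexagon : ∀ {X Y Z : Finset V} (x xb y yb : V)
    (hx : x ∈ X) (hxb : xb ∈ Y) (hy : y ∈ Y) (hyb : yb ∈ Z)
    (dfg : Disjoint (X.erase x) (Y.erase xb))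
    (dgh : Disjoint (Y.erase y) (Z.erase yb))
    (hyA : y ∈ X.erase x ∪ Y.erase xb)
    (dP2 : Disjoint ((X.erase x ∪ Y.erase xb).erase y) (Z.erase yb))
    (hxbC : xb ∈ Y.erase y ∪ Z.erase yb)
    (dQ2 : Disjoint (X.erase x) ((Y.erase y ∪ Z.erase yb).erase xb))
    (hyA' : y ∈ Y.erase xb ∪ X.erase x)
    (dP2' : Disjoint ((Y.erase xb ∪ X.erase x).erase y) (Z.erase yb))
    (hxbZY : xb ∈ Z.erase yb ∪ Y.erase y)
    (d6 : Disjoint ((Z.erase yb ∪ Y.erase y).erase xb) (X.erase x))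
    (f : Ob X) (g : Ob Y) (h : Ob Z),
    vcomp (bet yb y xb x hyb hy hxb hx dgh.symm hxbZY d6 dfg.symm hyA' dP2'.symm h g f)
      (vcomp (pcH xb x hxbC hxbZY hx hx dQ2.symm d6 (gam y yb hy hyb dgh g h) (vid f))
        (vcomp (gam x xb hx hxbC dQ2 f (pc y yb hy hyb dgh g h))
          (bet x xb y yb hx hxb hy hyb dfg hyA dP2 dgh hxbC dQ2 f g h)))
    = vcomp (gam y yb hyA' hyb dP2' (pc xb x hxb hx dfg.symm g f) h)
        (pcH y yb hyA hyA' hyb hyb dP2 dP2' (gam x xb hx hxb dfg f g) (vid h))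
  /-- (βγ-decagon). -/
  decagon : ∀ {X Y Z W : Finset V} (x xb y yb z zb : V)
    (hx : x ∈ X) (hxb : xb ∈ Y) (hy : y ∈ Y) (hyb : yb ∈ Z) (hz : z ∈ Y) (hzb : zb ∈ W)
    (dfg : Disjoint (X.erase x) (Y.erase xb))
    (dgh : Disjoint (Y.erase y) (Z.erase yb))
    (dgk : Disjoint (Y.erase z) (W.erase zb))
    (hyA : y ∈ X.erase x ∪ Y.erase xb)
    (dAh : Disjoint ((X.erase x ∪ Y.erase xb).erase y) (Z.erase yb))
    (hzB : z ∈ (X.erase x ∪ Y.erase xb).erase y ∪ Z.erase yb)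
    (dBk : Disjoint (((X.erase x ∪ Y.erase xb).erase y ∪ Z.erase yb).erase z) (W.erase zb))
    (hzB2 : z ∈ Z.erase yb ∪ (X.erase x ∪ Y.erase xb).erase y)
    (dB2k : Disjoint ((Z.erase yb ∪ (X.erase x ∪ Y.erase xb).erase y).erase z) (W.erase zb))
    (hzA : z ∈ X.erase x ∪ Y.erase xb)
    (dAk : Disjoint ((X.erase x ∪ Y.erase xb).erase z) (W.erase zb))
    (hyC1 : y ∈ (X.erase x ∪ Y.erase xb).erase z ∪ W.erase zb)
    (dhC : Disjoint (Z.erase yb) (((X.erase x ∪ Y.erase xb).erase z ∪ W.erase zb).erase y))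
    (hxbE : xb ∈ Y.erase z ∪ W.erase zb)
    (dfE : Disjoint (X.erase x) ((Y.erase z ∪ W.erase zb).erase xb))
    (hyF1 : y ∈ X.erase x ∪ (Y.erase z ∪ W.erase zb).erase xb)
    (dF1h : Disjoint ((X.erase x ∪ (Y.erase z ∪ W.erase zb).erase xb).erase y) (Z.erase yb))
    (hyE : y ∈ Y.erase z ∪ W.erase zb)
    (dEh : Disjoint ((Y.erase z ∪ W.erase zb).erase y) (Z.erase yb))
    (hxbG1 : xb ∈ (Y.erase z ∪ W.erase zb).erase y ∪ Z.erase yb)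
    (dfG1 : Disjoint (X.erase x) (((Y.erase z ∪ W.erase zb).erase y ∪ Z.erase yb).erase xb))
    (hxbC : xb ∈ Y.erase y ∪ Z.erase yb)
    (dfC : Disjoint (X.erase x) ((Y.erase y ∪ Z.erase yb).erase xb))
    (hzD : z ∈ X.erase x ∪ (Y.erase y ∪ Z.erase yb).erase xb)
    (dDk : Disjoint ((X.erase x ∪ (Y.erase y ∪ Z.erase yb).erase xb).erase z) (W.erase zb))
    (hzC : z ∈ Y.erase y ∪ Z.erase yb)
    (dCk : Disjoint ((Y.erase y ∪ Z.erase yb).erase z) (W.erase zb))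
    (hxbH1 : xb ∈ (Y.erase y ∪ Z.erase yb).erase z ∪ W.erase zb)
    (dfH1 : Disjoint (X.erase x) (((Y.erase y ∪ Z.erase yb).erase z ∪ W.erase zb).erase xb))
    (hzC2 : z ∈ Z.erase yb ∪ Y.erase y)
    (dC2k : Disjoint ((Z.erase yb ∪ Y.erase y).erase z) (W.erase zb))
    (hxbH2 : xb ∈ (Z.erase yb ∪ Y.erase y).erase z ∪ W.erase zb)
    (dfH2 : Disjoint (X.erase x) (((Z.erase yb ∪ Y.erase y).erase z ∪ W.erase zb).erase xb))
    (dhE : Disjoint (Z.erase yb) ((Y.erase z ∪ W.erase zb).erase y))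
    (hxbG2 : xb ∈ Z.erase yb ∪ (Y.erase z ∪ W.erase zb).erase y)
    (dfG2 : Disjoint (X.erase x) ((Z.erase yb ∪ (Y.erase z ∪ W.erase zb).erase y).erase xb))
    (f : Ob X) (g : Ob Y) (h : Ob Z) (k : Ob W),
    vcomp (bet x xb y yb hx hxbE hyE hyb dfE hyF1 dF1h dEh hxbG1 dfG1
            f (pc z zb hz hzb dgk g k) h)
      (vcomp (pcH y yb hyC1 hyF1 hyb hyb dhC.symm dF1h
                (bet x xb z zb hx hxb hz hzb dfg hzA dAk dgk hxbE dfE f g k) (vid h))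
        (vcomp (gam yb y hyb hyC1 dhC h (pc z zb hzA hzb dAk (pc x xb hx hxb dfg f g) k))
          (vcomp (bet yb y z zb hyb hyA hzA hzb dAh.symm hzB2 dB2k dAk hyC1 dhC
                    h (pc x xb hx hxb dfg f g) k)
            (pcH z zb hzB hzB2 hzb hzb dBk dB2k
              (gam y yb hyA hyb dAh (pc x xb hx hxb dfg f g) h) (vid k)))))
    = vcomp (pcH x xb hx hx hxbG2 hxbG1 dfG2 dfG1 (vid f)
              (gam yb y hyb hyE dhE h (pc z zb hz hzb dgk g k)))
        (vcomp (pcH x xb hx hx hxbH2 hxbG2 dfH2 dfG2 (vid f)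
                  (bet yb y z zb hyb hy hz hzb dgh.symm hzC2 dC2k dgk hyE dhE h g k))
          (vcomp (pcH x xb hx hx hxbH1 hxbH2 dfH1 dfH2 (vid f)
                    (pcH z zb hzC hzC2 hzb hzb dCk dC2k (gam y yb hy hyb dgh g h) (vid k)))
            (vcomp (bet x xb z zb hx hxbC hzC hzb dfC hzD dDk dCk hxbH1 dfH1
                      f (pc y yb hy hyb dgh g h) k)
              (pcH z zb hzB hzD hzb hzb dBk dDk
                (bet x xb y yb hx hxb hy hyb dfg hyA dAh dgh hxbC dfC f g h) (vid k)))))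

end CatCyclicOperad

namespace CatCyclicOperad

variable {V : Type} [DecidableEq V]

/-- The parallel associator
`ϑ^{x,x̄;y,ȳ}_{f,g,h} = γ^{x̄,x}_{g, f ᵧ∘_ȳ h} ∘ β^{x̄,x;y,ȳ}_{g,f,h} ∘ (γ^{x,x̄}_{f,g} ᵧ∘_ȳ 1_h)`
(equation (1) of the paper), a morphism `(f ₓ∘_x̄ g) ᵧ∘_ȳ h → (f ᵧ∘_ȳ h) ₓ∘_x̄ g`. -/
def CECO.theta (C : CECO V) {X Y Z : Finset V} (x xb y yb : V)
    (hx : x ∈ X) (hy : y ∈ X) (hxb : xb ∈ Y) (hyb : yb ∈ Z)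
    (d1 : Disjoint (X.erase x) (Y.erase xb))
    (hyU : y ∈ X.erase x ∪ Y.erase xb)
    (d2 : Disjoint ((X.erase x ∪ Y.erase xb).erase y) (Z.erase yb))
    (hyU' : y ∈ Y.erase xb ∪ X.erase x)
    (d2' : Disjoint ((Y.erase xb ∪ X.erase x).erase y) (Z.erase yb))
    (dfh : Disjoint (X.erase y) (Z.erase yb))
    (hxU : x ∈ X.erase y ∪ Z.erase yb)
    (dout : Disjoint (Y.erase xb) ((X.erase y ∪ Z.erase yb).erase x))
    (f : C.Ob X) (g : C.Ob Y) (h : C.Ob Z) :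
    C.Hom (C.pc y yb hyU hyb d2 (C.pc x xb hx hxb d1 f g) h)
          (C.pc x xb hxU hxb dout.symm (C.pc y yb hy hyb dfh f h) g) :=
  C.vcomp (C.gam xb x hxb hxU dout g (C.pc y yb hy hyb dfh f h))
    (C.vcomp (C.bet xb x y yb hxb hx hy hyb d1.symm hyU' d2' dfh hxU dout g f h)
      (C.pcH y yb hyU hyU' hyb hyb d2 d2' (C.gam x xb hx hxb d1 f g) (C.vid h)))

/-- Abstract cancellation lemma: if the middle four factors collapse via a hexagon-type
identity to `G ∘ H`, and the outer pairings `A ∘ G` and `H ∘ F` are identities, then the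
six-fold composite is the identity. -/
lemma CECO.cancel6 (C : CECO V) {S1 S2 S3 S4 S5 S7 : Finset V}
    {o1 : C.Ob S1} {o2 : C.Ob S2} {o3 : C.Ob S3} {o4 : C.Ob S4} {o5 : C.Ob S5}
    {o7 : C.Ob S7}
    (A : C.Hom o7 o1) (B : C.Hom o5 o7) (Cm : C.Hom o4 o5) (D : C.Hom o3 o4)
    (E : C.Hom o2 o3) (F : C.Hom o1 o2) (G : C.Hom o1 o7) (H : C.Hom o2 o1)
    (hex : C.vcomp B (C.vcomp Cm (C.vcomp D E)) = C.vcomp G H)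
    (hAG : C.vcomp A G = C.vid o1)
    (hHF : C.vcomp H F = C.vid o1) :
    C.vcomp (C.vcomp A (C.vcomp B Cm)) (C.vcomp D (C.vcomp E F)) = C.vid o1 := by
  have h1 : C.vcomp (C.vcomp A (C.vcomp B Cm)) (C.vcomp D (C.vcomp E F))
      = C.vcomp A (C.vcomp (C.vcomp B (C.vcomp Cm (C.vcomp D E))) F) := by
    simp only [C.vcomp_assoc]
  rw [h1, hex, C.vcomp_assoc, hHF, C.vcomp_vid, hAG]

/-- **(ϑ-involution)**, Lemma 2.6.1 of the paper: in a categorified entries-only cyclic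
operad, the parallel associator `ϑ` is involutive:
`ϑ^{y,ȳ;x,x̄}_{f,h,g} ∘ ϑ^{x,x̄;y,ȳ}_{f,g,h} = 1_{(f ₓ∘_x̄ g) ᵧ∘_ȳ h}`. -/
theorem theta_involution (C : CECO V) {X Y Z : Finset V} (x xb y yb : V)
    (hx : x ∈ X) (hy : y ∈ X) (hxb : xb ∈ Y) (hyb : yb ∈ Z)
    (d1 : Disjoint (X.erase x) (Y.erase xb))
    (hyU : y ∈ X.erase x ∪ Y.erase xb)
    (d2 : Disjoint ((X.erase x ∪ Y.erase xb).erase y) (Z.erase yb))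
    (hyU' : y ∈ Y.erase xb ∪ X.erase x)
    (d2' : Disjoint ((Y.erase xb ∪ X.erase x).erase y) (Z.erase yb))
    (dfh : Disjoint (X.erase y) (Z.erase yb))
    (hxU : x ∈ X.erase y ∪ Z.erase yb)
    (dout : Disjoint (Y.erase xb) ((X.erase y ∪ Z.erase yb).erase x))
    (hxU' : x ∈ Z.erase yb ∪ X.erase y)
    (d2'' : Disjoint ((Z.erase yb ∪ X.erase y).erase x) (Y.erase xb))
    (f : C.Ob X) (g : C.Ob Y) (h : C.Ob Z) :
    C.vcomp
      (C.theta y yb x xb hy hx hyb hxb dfh hxU dout.symm hxU' d2'' d1 hyU d2.symm f h g)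
      (C.theta x xb y yb hx hy hxb hyb d1 hyU d2 hyU' d2' dfh hxU dout f g h)
    = C.vid (C.pc y yb hyU hyb d2 (C.pc x xb hx hxb d1 f g) h) := by
  have hex := C.hexagon xb x y yb hxb hx hy hyb d1.symm dfh hyU' d2' hxU dout hyU d2
    hxU' d2'' g f h
  have hAG := C.gam_involution y yb hyU hyb d2 (C.pc x xb hx hxb d1 f g) h
  have hHF : C.vcomp
      (C.pcH y yb hyU' hyU hyb hyb d2' d2 (C.gam xb x hxb hx d1.symm g f) (C.vid h))
      (C.pcH y yb hyU hyU' hyb hyb d2 d2' (C.gam x xb hx hxb d1 f g) (C.vid h))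
      = C.vid (C.pc y yb hyU hyb d2 (C.pc x xb hx hxb d1 f g) h) := by
    rw [← C.pcH_vcomp y yb hyU hyU' hyU hyb hyb hyb d2 d2' d2
      (C.gam xb x hxb hx d1.symm g f) (C.gam x xb hx hxb d1 f g) (C.vid h) (C.vid h),
      C.gam_involution x xb hx hxb d1 f g, C.vcomp_vid, C.pcH_vid]
  exact C.cancel6 _ _ _ _ _ _ _ _ hex hAG hHF

end CatCyclicOperad
end

section
/- In a categorified entries-only cyclic operad, the parallel associator ϑ satisfies the hexagon identity: ϑ^{x,x̄;y,ȳ}_{f z∘ k, g, h} ∘ (ϑ^{x,x̄;z,z̄}_{f,g,k} ᵧ∘_{ȳ} 1_h) ∘ ϑ^{y,ȳ;z,z̄}_{f ₓ∘ g, h, k} = (ϑ^{y,ȳ;z,z̄}_{f,h,k} ₓ∘_{x̄} 1_g) ∘ ϑ^{x,x̄;z,z̄}_{f ᵧ∘ h, g, k} ∘ (ϑ^{x,x̄;y,ȳ}_{f,g,h} z∘_{z̄} 1_k), whenever both sides are well-typed. -/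
namespace CatCyclicOperad

variable {V : Type} [DecidableEq V]

namespace CECO
variable {V : Type} [DecidableEq V] (C : CECO V)

/-- Split a `pcH` whose left argument is a triple composite and right argument an identity. -/
theorem pcH_split3 {X0 X1 X2 X3 U : Finset V} (x u : V)
    (h0 : x ∈ X0) (h1 : x ∈ X1) (h2 : x ∈ X2) (h3 : x ∈ X3) (hu : u ∈ U)
    (d0 : Disjoint (X0.erase x) (U.erase u)) (d1 : Disjoint (X1.erase x) (U.erase u))
    (d2 : Disjoint (X2.erase x) (U.erase u)) (d3 : Disjoint (X3.erase x) (U.erase u))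
    {f0 : C.Ob X0} {f1 : C.Ob X1} {f2 : C.Ob X2} {f3 : C.Ob X3} {m : C.Ob U}
    (a : C.Hom f2 f3) (b : C.Hom f1 f2) (c : C.Hom f0 f1) :
    C.pcH x u h0 h3 hu hu d0 d3 (C.vcomp a (C.vcomp b c)) (C.vid m)
      = C.vcomp (C.pcH x u h2 h3 hu hu d2 d3 a (C.vid m))
          (C.vcomp (C.pcH x u h1 h2 hu hu d1 d2 b (C.vid m))
            (C.pcH x u h0 h1 hu hu d0 d1 c (C.vid m))) := by
  rw [← C.pcH_vcomp x u h0 h1 h2 hu hu hu d0 d1 d2 b c (C.vid m) (C.vid m),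
      ← C.pcH_vcomp x u h0 h2 h3 hu hu hu d0 d2 d3 a (C.vcomp b c) (C.vid m)
        (C.vcomp (C.vid m) (C.vid m)),
      C.vcomp_vid, C.vcomp_vid]

/-- Split a `pcH` whose right argument is a triple composite and left argument an identity. -/
theorem pcH_split3' {M U0 U1 U2 U3 : Finset V} (x u : V) (hx : x ∈ M)
    (h0 : u ∈ U0) (h1 : u ∈ U1) (h2 : u ∈ U2) (h3 : u ∈ U3)
    (d0 : Disjoint (M.erase x) (U0.erase u)) (d1 : Disjoint (M.erase x) (U1.erase u))
    (d2 : Disjoint (M.erase x) (U2.erase u)) (d3 : Disjoint (M.erase x) (U3.erase u))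
    {m : C.Ob M} {f0 : C.Ob U0} {f1 : C.Ob U1} {f2 : C.Ob U2} {f3 : C.Ob U3}
    (a : C.Hom f2 f3) (b : C.Hom f1 f2) (c : C.Hom f0 f1) :
    C.pcH x u hx hx h0 h3 d0 d3 (C.vid m) (C.vcomp a (C.vcomp b c))
      = C.vcomp (C.pcH x u hx hx h2 h3 d2 d3 (C.vid m) a)
          (C.vcomp (C.pcH x u hx hx h1 h2 d1 d2 (C.vid m) b)
            (C.pcH x u hx hx h0 h1 d0 d1 (C.vid m) c)) := by
  rw [← C.pcH_vcomp x u hx hx hx h0 h1 h2 d0 d1 d2 (C.vid m) (C.vid m) b c,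
      ← C.pcH_vcomp x u hx hx hx h0 h2 h3 d0 d2 d3 (C.vid m)
        (C.vcomp (C.vid m) (C.vid m)) a (C.vcomp b c),
      C.vcomp_vid, C.vcomp_vid]

theorem cancel_head {M N U : Finset V} {m : C.Ob M} {n : C.Ob N} {u : C.Ob U}
    {a1 : C.Hom n m} {a2 : C.Hom m n} (e : C.vcomp a1 a2 = C.vid m) {t : C.Hom u m} :
    C.vcomp a1 (C.vcomp a2 t) = t := by
  rw [← C.vcomp_assoc, e, C.vid_vcomp]

theorem chain5 {S0 S1 S2 S3 S4 S5 T1 T2 T3 T4 U : Finset V}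
    {s0 : C.Ob S0} {s1 : C.Ob S1} {s2 : C.Ob S2} {s3 : C.Ob S3} {s4 : C.Ob S4}
    {s5 : C.Ob S5} {t1 : C.Ob T1} {t2 : C.Ob T2} {t3 : C.Ob T3} {t4 : C.Ob T4}
    {u : C.Ob U}
    {a1 : C.Hom s4 s5} {a2 : C.Hom s3 s4} {a3 : C.Hom s2 s3} {a4 : C.Hom s1 s2}
    {a5 : C.Hom s0 s1}
    {b1 : C.Hom t4 s5} {b2 : C.Hom t3 t4} {b3 : C.Hom t2 t3} {b4 : C.Hom t1 t2}
    {b5 : C.Hom s0 t1}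
    (e : C.vcomp a1 (C.vcomp a2 (C.vcomp a3 (C.vcomp a4 a5)))
        = C.vcomp b1 (C.vcomp b2 (C.vcomp b3 (C.vcomp b4 b5))))
    {t : C.Hom u s0} :
    C.vcomp a1 (C.vcomp a2 (C.vcomp a3 (C.vcomp a4 (C.vcomp a5 t))))
      = C.vcomp b1 (C.vcomp b2 (C.vcomp b3 (C.vcomp b4 (C.vcomp b5 t)))) := by
  simp only [← C.vcomp_assoc] at e ⊢
  rw [e]

theorem chain42 {S0 S1 S2 S3 S4 T1 U : Finset V}
    {s0 : C.Ob S0} {s1 : C.Ob S1} {s2 : C.Ob S2} {s3 : C.Ob S3} {s4 : C.Ob S4}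
    {t1 : C.Ob T1} {u : C.Ob U}
    {a1 : C.Hom s3 s4} {a2 : C.Hom s2 s3} {a3 : C.Hom s1 s2} {a4 : C.Hom s0 s1}
    {b1 : C.Hom t1 s4} {b2 : C.Hom s0 t1}
    (e : C.vcomp a1 (C.vcomp a2 (C.vcomp a3 a4)) = C.vcomp b1 b2)
    {t : C.Hom u s0} :
    C.vcomp a1 (C.vcomp a2 (C.vcomp a3 (C.vcomp a4 t))) = C.vcomp b1 (C.vcomp b2 t) := by
  simp only [← C.vcomp_assoc] at e ⊢
  rw [e]

end CECO

/-- **(ϑ-hexagon)**, Lemma 2.6.3 of the paper: in a categorified entries-only cyclic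
operad the parallel associator `ϑ` satisfies the hexagon identity
`ϑ^{x,x̄;y,ȳ}_{f ₓ∘_z̄ k,g,h} ∘ (ϑ^{x,x̄;z,z̄}_{f,g,k} ᵧ∘_ȳ 1_h) ∘ ϑ^{y,ȳ;z,z̄}_{f ₓ∘_x̄ g,h,k}
 = (ϑ^{y,ȳ;z,z̄}_{f,h,k} ₓ∘_x̄ 1_g) ∘ ϑ^{x,x̄;z,z̄}_{f ᵧ∘_ȳ h,g,k} ∘ (ϑ^{x,x̄;y,ȳ}_{f,g,h} ₓ∘_z̄ 1_k)`,
whenever both sides are well-typed. -/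
theorem theta_hexagon (C : CECO V) {X Y Z W : Finset V} (x xb y yb z zb : V)
    (hx : x ∈ X) (hy : y ∈ X) (hz : z ∈ X) (hxb : xb ∈ Y) (hyb : yb ∈ Z) (hzb : zb ∈ W)
    (d1 : Disjoint (X.erase x) (Y.erase xb))
    (dfh : Disjoint (X.erase y) (Z.erase yb))
    (dfk : Disjoint (X.erase z) (W.erase zb))
    (hyA : y ∈ X.erase x ∪ Y.erase xb)
    (dAh : Disjoint ((X.erase x ∪ Y.erase xb).erase y) (Z.erase yb))
    (hzA : z ∈ X.erase x ∪ Y.erase xb)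
    (dAk : Disjoint ((X.erase x ∪ Y.erase xb).erase z) (W.erase zb))
    (hzB1 : z ∈ (X.erase x ∪ Y.erase xb).erase y ∪ Z.erase yb)
    (dB1k : Disjoint (((X.erase x ∪ Y.erase xb).erase y ∪ Z.erase yb).erase z) (W.erase zb))
    (hzB1' : z ∈ Z.erase yb ∪ (X.erase x ∪ Y.erase xb).erase y)
    (dB1k' : Disjoint ((Z.erase yb ∪ (X.erase x ∪ Y.erase xb).erase y).erase z) (W.erase zb))
    (hyC : y ∈ (X.erase x ∪ Y.erase xb).erase z ∪ W.erase zb)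
    (dhC : Disjoint (Z.erase yb) (((X.erase x ∪ Y.erase xb).erase z ∪ W.erase zb).erase y))
    (hzA' : z ∈ Y.erase xb ∪ X.erase x)
    (dAk' : Disjoint ((Y.erase xb ∪ X.erase x).erase z) (W.erase zb))
    (hxFk : x ∈ X.erase z ∪ W.erase zb)
    (dgFk : Disjoint (Y.erase xb) ((X.erase z ∪ W.erase zb).erase x))
    (hyN3 : y ∈ (X.erase z ∪ W.erase zb).erase x ∪ Y.erase xb)
    (dN3 : Disjoint (((X.erase z ∪ W.erase zb).erase x ∪ Y.erase xb).erase y) (Z.erase yb))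
    (hyFk : y ∈ X.erase z ∪ W.erase zb)
    (hyN3' : y ∈ Y.erase xb ∪ (X.erase z ∪ W.erase zb).erase x)
    (dN3' : Disjoint ((Y.erase xb ∪ (X.erase z ∪ W.erase zb).erase x).erase y) (Z.erase yb))
    (dFkh : Disjoint ((X.erase z ∪ W.erase zb).erase y) (Z.erase yb))
    (hxN4 : x ∈ (X.erase z ∪ W.erase zb).erase y ∪ Z.erase yb)
    (dgN4 : Disjoint (Y.erase xb) (((X.erase z ∪ W.erase zb).erase y ∪ Z.erase yb).erase x))
    (hyA' : y ∈ Y.erase xb ∪ X.erase x)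
    (dAh' : Disjoint ((Y.erase xb ∪ X.erase x).erase y) (Z.erase yb))
    (hxAfh : x ∈ X.erase y ∪ Z.erase yb)
    (dout : Disjoint (Y.erase xb) ((X.erase y ∪ Z.erase yb).erase x))
    (hzN5 : z ∈ (X.erase y ∪ Z.erase yb).erase x ∪ Y.erase xb)
    (dN5k : Disjoint (((X.erase y ∪ Z.erase yb).erase x ∪ Y.erase xb).erase z) (W.erase zb))
    (hzAfh : z ∈ X.erase y ∪ Z.erase yb)
    (hzN5' : z ∈ Y.erase xb ∪ (X.erase y ∪ Z.erase yb).erase x)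
    (dN5k' : Disjoint ((Y.erase xb ∪ (X.erase y ∪ Z.erase yb).erase x).erase z) (W.erase zb))
    (dFhk : Disjoint ((X.erase y ∪ Z.erase yb).erase z) (W.erase zb))
    (hxN6 : x ∈ (X.erase y ∪ Z.erase yb).erase z ∪ W.erase zb)
    (dgN6 : Disjoint (Y.erase xb) (((X.erase y ∪ Z.erase yb).erase z ∪ W.erase zb).erase x))
    (hzAfh' : z ∈ Z.erase yb ∪ X.erase y)
    (dFhk' : Disjoint ((Z.erase yb ∪ X.erase y).erase z) (W.erase zb))
    (dhFk : Disjoint (Z.erase yb) ((X.erase z ∪ W.erase zb).erase y))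
    (f : C.Ob X) (g : C.Ob Y) (h : C.Ob Z) (k : C.Ob W) :
    C.vcomp
      (C.theta x xb y yb hxFk hyFk hxb hyb dgFk.symm hyN3 dN3 hyN3' dN3' dFkh hxN4 dgN4
        (C.pc z zb hz hzb dfk f k) g h)
      (C.vcomp
        (C.pcH y yb hyC hyN3 hyb hyb dhC.symm dN3
          (C.theta x xb z zb hx hz hxb hzb d1 hzA dAk hzA' dAk' dfk hxFk dgFk f g k)
          (C.vid h))
        (C.theta y yb z zb hyA hzA hyb hzb dAh hzB1 dB1k hzB1' dB1k' dAk hyC dhC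
          (C.pc x xb hx hxb d1 f g) h k))
    = C.vcomp
        (C.pcH x xb hxN6 hxN4 hxb hxb dgN6.symm dgN4.symm
          (C.theta y yb z zb hy hz hyb hzb dfh hzAfh dFhk hzAfh' dFhk' dfk hyFk dhFk
            f h k)
          (C.vid g))
        (C.vcomp
          (C.theta x xb z zb hxAfh hzAfh hxb hzb dout.symm hzN5 dN5k hzN5' dN5k' dFhk hxN6 dgN6
            (C.pc y yb hy hyb dfh f h) g k)
          (C.pcH z zb hzB1 hzN5 hzb hzb dB1k dN5k
            (C.theta x xb y yb hx hy hxb hyb d1 hyA dAh hyA' dAh' dfh hxAfh dout f g h)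
            (C.vid k))) := by
  -- abbreviation-free diagram chase; the decagon (with the roles of `f` and `g`
  -- exchanged) is the heart of the proof.
  simp only [CECO.theta]
  -- reordered-union variants of the given membership/disjointness certificates
  have hyC1 : y ∈ (Y.erase xb ∪ X.erase x).erase z ∪ W.erase zb := by
    rw [Finset.union_comm (Y.erase xb) (X.erase x)]; exact hyC
  have dhC1 : Disjoint (Z.erase yb) (((Y.erase xb ∪ X.erase x).erase z ∪ W.erase zb).erase y) := by
    rw [Finset.union_comm (Y.erase xb) (X.erase x)]; exact dhC
  have hzB' : z ∈ (Y.erase xb ∪ X.erase x).erase y ∪ Z.erase yb := by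
    rw [Finset.union_comm (Y.erase xb) (X.erase x)]; exact hzB1
  have dBk' : Disjoint (((Y.erase xb ∪ X.erase x).erase y ∪ Z.erase yb).erase z) (W.erase zb) := by
    rw [Finset.union_comm (Y.erase xb) (X.erase x)]; exact dB1k
  have hzB2' : z ∈ Z.erase yb ∪ (Y.erase xb ∪ X.erase x).erase y := by
    rw [Finset.union_comm (Y.erase xb) (X.erase x)]; exact hzB1'
  have dB2k' : Disjoint ((Z.erase yb ∪ (Y.erase xb ∪ X.erase x).erase y).erase z) (W.erase zb) := by
    rw [Finset.union_comm (Y.erase xb) (X.erase x)]; exact dB1k'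
  have hxG2 : x ∈ Z.erase yb ∪ (X.erase z ∪ W.erase zb).erase y := by
    rw [Finset.union_comm (Z.erase yb)]; exact hxN4
  have dgG2 : Disjoint (Y.erase xb) ((Z.erase yb ∪ (X.erase z ∪ W.erase zb).erase y).erase x) := by
    rw [Finset.union_comm (Z.erase yb)]; exact dgN4
  have hxH2 : x ∈ (Z.erase yb ∪ X.erase y).erase z ∪ W.erase zb := by
    rw [Finset.union_comm (Z.erase yb)]; exact hxN6
  have dgH2 : Disjoint (Y.erase xb) (((Z.erase yb ∪ X.erase y).erase z ∪ W.erase zb).erase x) := by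
    rw [Finset.union_comm (Z.erase yb)]; exact dgN6
  -- split the two `pcH`s applied to parallel associators
  rw [C.pcH_split3 y yb hyC hyC1 hyN3' hyN3 hyb dhC.symm dhC1.symm dN3' dN3
        (C.gam xb x hxb hxFk dgFk g (C.pc z zb hz hzb dfk f k))
        (C.bet xb x z zb hxb hx hz hzb d1.symm hzA' dAk' dfk hxFk dgFk g f k)
        (C.pcH z zb hzA hzA' hzb hzb dAk dAk' (C.gam x xb hx hxb d1 f g) (C.vid k)),
      C.pcH_split3 z zb hzB1 hzB' hzN5' hzN5 hzb dB1k dBk' dN5k' dN5k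
        (C.gam xb x hxb hxAfh dout g (C.pc y yb hy hyb dfh f h))
        (C.bet xb x y yb hxb hx hy hyb d1.symm hyA' dAh' dfh hxAfh dout g f h)
        (C.pcH y yb hyA hyA' hyb hyb dAh dAh' (C.gam x xb hx hxb d1 f g) (C.vid h))]
  simp only [C.vcomp_assoc]
  -- the two γγ-cancellations
  have hc1 : C.vcomp
      (C.pcH y yb hyN3 hyN3' hyb hyb dN3 dN3'
        (C.gam x xb hxFk hxb dgFk.symm (C.pc z zb hz hzb dfk f k) g) (C.vid h))
      (C.pcH y yb hyN3' hyN3 hyb hyb dN3' dN3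
        (C.gam xb x hxb hxFk dgFk g (C.pc z zb hz hzb dfk f k)) (C.vid h))
      = C.vid (C.pc y yb hyN3' hyb dN3'
          (C.pc xb x hxb hxFk dgFk g (C.pc z zb hz hzb dfk f k)) h) := by
    rw [← C.pcH_vcomp y yb hyN3' hyN3 hyN3' hyb hyb hyb dN3' dN3 dN3'
          (C.gam x xb hxFk hxb dgFk.symm (C.pc z zb hz hzb dfk f k) g)
          (C.gam xb x hxb hxFk dgFk g (C.pc z zb hz hzb dfk f k)) (C.vid h) (C.vid h),
        C.gam_involution xb x hxb hxFk dgFk g (C.pc z zb hz hzb dfk f k),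
        C.vcomp_vid, C.pcH_vid]
  have hc2 : C.vcomp
      (C.pcH z zb hzN5 hzN5' hzb hzb dN5k dN5k'
        (C.gam x xb hxAfh hxb dout.symm (C.pc y yb hy hyb dfh f h) g) (C.vid k))
      (C.pcH z zb hzN5' hzN5 hzb hzb dN5k' dN5k
        (C.gam xb x hxb hxAfh dout g (C.pc y yb hy hyb dfh f h)) (C.vid k))
      = C.vid (C.pc z zb hzN5' hzb dN5k'
          (C.pc xb x hxb hxAfh dout g (C.pc y yb hy hyb dfh f h)) k) := by
    rw [← C.pcH_vcomp z zb hzN5' hzN5 hzN5' hzb hzb hzb dN5k' dN5k dN5k'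
          (C.gam x xb hxAfh hxb dout.symm (C.pc y yb hy hyb dfh f h) g)
          (C.gam xb x hxb hxAfh dout g (C.pc y yb hy hyb dfh f h)) (C.vid k) (C.vid k),
        C.gam_involution xb x hxb hxAfh dout g (C.pc y yb hy hyb dfh f h),
        C.vcomp_vid, C.pcH_vid]
  rw [C.cancel_head hc1, C.cancel_head hc2]
  -- naturality: push `γ_{f,g} ∘ 1` through the third parallel associator
  have e1 := C.gam_natural yb y hyb hyb hyC hyC1 dhC dhC1 (C.vid h)
      (C.pcH z zb hzA hzA' hzb hzb dAk dAk' (C.gam x xb hx hxb d1 f g) (C.vid k))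
  have e2 := C.bet_natural yb y z zb hyb hyb hyA hyA' hzA hzA' hzb hzb dAh.symm dAh'.symm
      hzB1' hzB2' dB1k' dB2k' dAk dAk' hyC hyC1 dhC dhC1
      (C.vid h) (C.gam x xb hx hxb d1 f g) (C.vid k)
  have e3i := C.gam_natural y yb hyA hyA' hyb hyb dAh dAh'
      (C.gam x xb hx hxb d1 f g) (C.vid h)
  have e3 : C.vcomp
      (C.pcH z zb hzB1' hzB2' hzb hzb dB1k' dB2k'
        (C.pcH yb y hyb hyb hyA hyA' dAh.symm dAh'.symm (C.vid h)
          (C.gam x xb hx hxb d1 f g)) (C.vid k))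
      (C.pcH z zb hzB1 hzB1' hzb hzb dB1k dB1k'
        (C.gam y yb hyA hyb dAh (C.pc x xb hx hxb d1 f g) h) (C.vid k))
      = C.vcomp
        (C.pcH z zb hzB' hzB2' hzb hzb dBk' dB2k'
          (C.gam y yb hyA' hyb dAh' (C.pc xb x hxb hx d1.symm g f) h) (C.vid k))
        (C.pcH z zb hzB1 hzB' hzb hzb dB1k dBk'
          (C.pcH y yb hyA hyA' hyb hyb dAh dAh' (C.gam x xb hx hxb d1 f g) (C.vid h))
          (C.vid k)) := by
    rw [← C.pcH_vcomp z zb hzB1 hzB1' hzB2' hzb hzb hzb dB1k dB1k' dB2k'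
          (C.pcH yb y hyb hyb hyA hyA' dAh.symm dAh'.symm (C.vid h)
            (C.gam x xb hx hxb d1 f g))
          (C.gam y yb hyA hyb dAh (C.pc x xb hx hxb d1 f g) h) (C.vid k) (C.vid k),
        ← e3i,
        C.pcH_vcomp z zb hzB1 hzB' hzB2' hzb hzb hzb dB1k dBk' dB2k'
          (C.gam y yb hyA' hyb dAh' (C.pc xb x hxb hx d1.symm g f) h)
          (C.pcH y yb hyA hyA' hyb hyb dAh dAh' (C.gam x xb hx hxb d1 f g) (C.vid h))
          (C.vid k) (C.vid k)]
  have hnat : C.vcomp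
      (C.pcH y yb hyC hyC1 hyb hyb dhC.symm dhC1.symm
        (C.pcH z zb hzA hzA' hzb hzb dAk dAk' (C.gam x xb hx hxb d1 f g) (C.vid k))
        (C.vid h))
      (C.vcomp (C.gam yb y hyb hyC dhC h (C.pc z zb hzA hzb dAk (C.pc x xb hx hxb d1 f g) k))
        (C.vcomp (C.bet yb y z zb hyb hyA hzA hzb dAh.symm hzB1' dB1k' dAk hyC dhC
            h (C.pc x xb hx hxb d1 f g) k)
          (C.pcH z zb hzB1 hzB1' hzb hzb dB1k dB1k'
            (C.gam y yb hyA hyb dAh (C.pc x xb hx hxb d1 f g) h) (C.vid k))))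
      = C.vcomp
        (C.gam yb y hyb hyC1 dhC1 h (C.pc z zb hzA' hzb dAk' (C.pc xb x hxb hx d1.symm g f) k))
        (C.vcomp (C.bet yb y z zb hyb hyA' hzA' hzb dAh'.symm hzB2' dB2k' dAk' hyC1 dhC1
            h (C.pc xb x hxb hx d1.symm g f) k)
          (C.vcomp
            (C.pcH z zb hzB' hzB2' hzb hzb dBk' dB2k'
              (C.gam y yb hyA' hyb dAh' (C.pc xb x hxb hx d1.symm g f) h) (C.vid k))
            (C.pcH z zb hzB1 hzB' hzb hzb dB1k dBk'
              (C.pcH y yb hyA hyA' hyb hyb dAh dAh' (C.gam x xb hx hxb d1 f g) (C.vid h))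
              (C.vid k)))) := by
    rw [← C.vcomp_assoc, ← e1, C.vcomp_assoc]
    refine congrArg _ ?_
    rw [← C.vcomp_assoc, ← e2, C.vcomp_assoc]
    refine congrArg _ ?_
    exact e3
  rw [hnat]
  -- the decagon with the roles of `f` and `g` exchanged
  have D := C.decagon xb x y yb z zb hxb hx hy hyb hz hzb d1.symm dfh dfk hyA' dAh'
      hzB' dBk' hzB2' dB2k' hzA' dAk' hyC1 dhC1 hxFk dgFk hyN3' dN3' hyFk dFkh hxN4 dgN4
      hxAfh dout hzN5' dN5k' hzAfh dFhk hxN6 dgN6 hzAfh' dFhk' hxH2 dgH2 dhFk hxG2 dgG2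
      g f h k
  rw [C.chain5 D]
  -- merge the three whiskered morphisms and apply γ-naturality once more
  have hm : C.vcomp
      (C.gam xb x hxb hxN4 dgN4 g
        (C.pc y yb hyFk hyb dFkh (C.pc z zb hz hzb dfk f k) h))
      (C.vcomp
        (C.pcH xb x hxb hxb hxG2 hxN4 dgG2 dgN4 (C.vid g)
          (C.gam yb y hyb hyFk dhFk h (C.pc z zb hz hzb dfk f k)))
        (C.vcomp
          (C.pcH xb x hxb hxb hxH2 hxG2 dgH2 dgG2 (C.vid g)
            (C.bet yb y z zb hyb hy hz hzb dfh.symm hzAfh' dFhk' dfk hyFk dhFk h f k))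
          (C.pcH xb x hxb hxb hxN6 hxH2 dgN6 dgH2 (C.vid g)
            (C.pcH z zb hzAfh hzAfh' hzb hzb dFhk dFhk' (C.gam y yb hy hyb dfh f h)
              (C.vid k)))))
      = C.vcomp
        (C.pcH x xb hxN6 hxN4 hxb hxb dgN6.symm dgN4.symm
          (C.vcomp (C.gam yb y hyb hyFk dhFk h (C.pc z zb hz hzb dfk f k))
            (C.vcomp (C.bet yb y z zb hyb hy hz hzb dfh.symm hzAfh' dFhk' dfk hyFk dhFk h f k)
              (C.pcH z zb hzAfh hzAfh' hzb hzb dFhk dFhk' (C.gam y yb hy hyb dfh f h)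
                (C.vid k))))
          (C.vid g))
        (C.gam xb x hxb hxN6 dgN6 g
          (C.pc z zb hzAfh hzb dFhk (C.pc y yb hy hyb dfh f h) k)) := by
    rw [← C.pcH_split3' xb x hxb hxN6 hxH2 hxG2 hxN4 dgN6 dgH2 dgG2 dgN4
          (C.gam yb y hyb hyFk dhFk h (C.pc z zb hz hzb dfk f k))
          (C.bet yb y z zb hyb hy hz hzb dfh.symm hzAfh' dFhk' dfk hyFk dhFk h f k)
          (C.pcH z zb hzAfh hzAfh' hzb hzb dFhk dFhk' (C.gam y yb hy hyb dfh f h) (C.vid k))]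
    exact C.gam_natural xb x hxb hxb hxN6 hxN4 dgN6 dgN4 (C.vid g)
      (C.vcomp (C.gam yb y hyb hyFk dhFk h (C.pc z zb hz hzb dfk f k))
        (C.vcomp (C.bet yb y z zb hyb hy hz hzb dfh.symm hzAfh' dFhk' dfk hyFk dhFk h f k)
          (C.pcH z zb hzAfh hzAfh' hzb hzb dFhk dFhk' (C.gam y yb hy hyb dfh f h) (C.vid k))))
  rw [C.chain42 hm]


end CatCyclicOperad
end

section
/- In a categorified entries-only cyclic operad, the two natural candidate definitions of the parallel associator coincide: γ^{x̄,x}_{g, f ᵧ∘_{ȳ} h} ∘ β^{x̄,x;y,ȳ}_{g,f,h} ∘ (γ^{x,x̄}_{f,g} ᵧ∘_{ȳ} 1_h) = (γ^{ȳ,y}_{h,f} ₓ∘_{x̄} 1_g) ∘ (β^{ȳ,y;x,x̄}_{h,f,g})⁻¹ ∘ γ^{y,ȳ}_{f ₓ∘_{x̄} g, h}, as morphisms (f ₓ∘_{x̄} g) ᵧ∘_{ȳ} h → (f ᵧ∘_{ȳ} h) ₓ∘_{x̄} g. -/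
namespace CatCyclicOperad

variable {V : Type} [DecidableEq V]

/-- Remark 2.5.1 of the paper (a reformulation of the (βγ-hexagon) coherence): in a
categorified entries-only cyclic operad the two natural candidate definitions of the
parallel associator coincide:
`γ^{x̄,x}_{g, f ᵧ∘_ȳ h} ∘ β^{x̄,x;y,ȳ}_{g,f,h} ∘ (γ^{x,x̄}_{f,g} ᵧ∘_ȳ 1_h)
 = (γ^{ȳ,y}_{h,f} ₓ∘_x̄ 1_g) ∘ (β^{ȳ,y;x,x̄}_{h,f,g})⁻¹ ∘ γ^{y,ȳ}_{f ₓ∘_x̄ g, h}`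
as morphisms `(f ₓ∘_x̄ g) ᵧ∘_ȳ h → (f ᵧ∘_ȳ h) ₓ∘_x̄ g`. -/
theorem theta_two_definitions (C : CECO V) {X Y Z : Finset V} (x xb y yb : V)
    (hx : x ∈ X) (hy : y ∈ X) (hxb : xb ∈ Y) (hyb : yb ∈ Z)
    (d1 : Disjoint (X.erase x) (Y.erase xb))
    (hyU : y ∈ X.erase x ∪ Y.erase xb)
    (d2 : Disjoint ((X.erase x ∪ Y.erase xb).erase y) (Z.erase yb))
    (hyU' : y ∈ Y.erase xb ∪ X.erase x)
    (d2' : Disjoint ((Y.erase xb ∪ X.erase x).erase y) (Z.erase yb))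
    (dfh : Disjoint (X.erase y) (Z.erase yb))
    (hxU : x ∈ X.erase y ∪ Z.erase yb)
    (dout : Disjoint (Y.erase xb) ((X.erase y ∪ Z.erase yb).erase x))
    (hxZX : x ∈ Z.erase yb ∪ X.erase y)
    (dZXg : Disjoint ((Z.erase yb ∪ X.erase y).erase x) (Y.erase xb))
    (f : C.Ob X) (g : C.Ob Y) (h : C.Ob Z) :
    C.vcomp (C.gam xb x hxb hxU dout g (C.pc y yb hy hyb dfh f h))
      (C.vcomp (C.bet xb x y yb hxb hx hy hyb d1.symm hyU' d2' dfh hxU dout g f h)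
        (C.pcH y yb hyU hyU' hyb hyb d2 d2' (C.gam x xb hx hxb d1 f g) (C.vid h)))
    = C.vcomp
        (C.pcH x xb hxZX hxU hxb hxb dZXg dout.symm
          (C.gam yb y hyb hy dfh.symm h f) (C.vid g))
        (C.vcomp
          (C.betInv yb y x xb hyb hy hx hxb dfh.symm hxZX dZXg d1 hyU d2.symm h f g)
          (C.gam y yb hyU hyb d2 (C.pc x xb hx hxb d1 f g) h)) := by
  have H := C.hexagon xb x y yb hxb hx hy hyb d1.symm dfh hyU' d2' hxU dout hyU d2
    hxZX dZXg g f h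
  -- cancellation of the two `pcH`-whiskered commutators
  have hQ : C.vcomp (C.pcH y yb hyU' hyU hyb hyb d2' d2 (C.gam xb x hxb hx d1.symm g f)
        (C.vid h))
      (C.pcH y yb hyU hyU' hyb hyb d2 d2' (C.gam x xb hx hxb d1 f g) (C.vid h))
      = C.vid (C.pc y yb hyU hyb d2 (C.pc x xb hx hxb d1 f g) h) := by
    rw [← C.pcH_vcomp y yb hyU hyU' hyU hyb hyb hyb d2 d2' d2,
      C.gam_involution x xb hx hxb d1 f g, C.vcomp_vid, C.pcH_vid]
  have hP : C.vcomp
      (C.pcH x xb hxZX hxU hxb hxb dZXg dout.symm (C.gam yb y hyb hy dfh.symm h f) (C.vid g))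
      (C.pcH x xb hxU hxZX hxb hxb dout.symm dZXg (C.gam y yb hy hyb dfh f h) (C.vid g))
      = C.vid (C.pc x xb hxU hxb dout.symm (C.pc y yb hy hyb dfh f h) g) := by
    rw [← C.pcH_vcomp x xb hxU hxZX hxU hxb hxb hxb dout.symm dZXg dout.symm,
      C.gam_involution y yb hy hyb dfh f h, C.vcomp_vid, C.pcH_vid]
  have key : C.vcomp (C.gam xb x hxb hxU dout g (C.pc y yb hy hyb dfh f h))
      (C.bet xb x y yb hxb hx hy hyb d1.symm hyU' d2' dfh hxU dout g f h)
      = C.vcomp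
        (C.pcH x xb hxZX hxU hxb hxb dZXg dout.symm
          (C.gam yb y hyb hy dfh.symm h f) (C.vid g))
        (C.vcomp
          (C.betInv yb y x xb hyb hy hx hxb dfh.symm hxZX dZXg d1 hyU d2.symm h f g)
          (C.vcomp (C.gam y yb hyU hyb d2 (C.pc x xb hx hxb d1 f g) h)
            (C.pcH y yb hyU' hyU hyb hyb d2' d2 (C.gam xb x hxb hx d1.symm g f)
              (C.vid h)))) := by
    rw [← H, ← C.vcomp_assoc
        (C.betInv yb y x xb hyb hy hx hxb dfh.symm hxZX dZXg d1 hyU d2.symm h f g),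
      C.betInv_bet yb y x xb hyb hy hx hxb dfh.symm hxZX dZXg d1 hyU d2.symm h f g,
      C.vid_vcomp, ← C.vcomp_assoc, hP, C.vid_vcomp]
  rw [← C.vcomp_assoc, key, C.vcomp_assoc, C.vcomp_assoc, C.vcomp_assoc, hQ, C.vcomp_vid]

end CatCyclicOperad
end

section
/- Substitution of a renamed parameter in an object term corresponds to the bijection action on its interpretation: if W is an object term of type X of the σ-free syntax, x ∈ X, a is a parameter of W with x ∈ FV(a), and τ : FV(a)\{x} ∪ {x'} → FV(a) renames x to x', then [W[a^τ/a]] = [W]^σ, where σ : X\{x} ∪ {x'} → X renames x to x'. Moreover, for any arrow term φ with source W, [φ[a^τ/a]] = [φ]^σ. -/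
/-!
Induction on the derivation of the substitution, with `σ = swap x x'`. On a partial composition
`W₁ ₓ□ᵧ W₂` whose parameter `a` lies in `W₁`, the entries of `W₂` other than the composed one
avoid both `x` and `x'`, so (EQ) applies with `σ` on `W₁` and the identity on `W₂`, whose
interpretation is unchanged since the identity acts trivially. For arrow terms, functoriality of
the action handles identities and composition, while (EQ-mor), (γσ) and (βσ) handle parallel
composition, `γ` and `β`; there `σ` acts on every factor, and it renames the indices exactly as
`rn x x'` does because `x'` is fresh.
-/

namespace CatCyclicOperad

/-- A categorified entries-only cyclic operad together with its strict action of
bijections (renamings) `σ : V ≃ V`: `act σ : C(X) → C(σ⁻¹[X])` on objects and morphisms,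
functorially, satisfying the strict equivariance axiom (EQ) on objects as well as the
coherence conditions (βσ), (γσ) and (EQ-mor) relating the action to `β`, `γ` and the
partial composition of morphisms.  Index-set identifications are recorded by quantified
equalities `e` and transports. -/
structure CECOE (V : Type) [DecidableEq V] extends CECO V where
  act : {X : Finset V} → (σ : V ≃ V) → Ob X → Ob (X.image ⇑σ.symm)
  actH : {S T : Finset V} → (σ : V ≃ V) → {f : Ob S} → {g : Ob T} →
    Hom f g → Hom (act σ f) (act σ g)
  actH_vid : ∀ {X : Finset V} (σ : V ≃ V) (f : Ob X), actH σ (vid f) = vid (act σ f)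
  actH_vcomp : ∀ {S T U : Finset V} (σ : V ≃ V) {f : Ob S} {g : Ob T} {h : Ob U}
    (φ : Hom g h) (ψ : Hom f g), actH σ (vcomp φ ψ) = vcomp (actH σ φ) (actH σ ψ)
  act_one : ∀ {X : Finset V} (e : X.image ⇑(1 : V ≃ V).symm = X) (f : Ob X),
    e ▸ act 1 f = f
  act_mul : ∀ {X : Finset V} (σ τ : V ≃ V)
    (e : (X.image ⇑σ.symm).image ⇑τ.symm = X.image ⇑(τ.trans σ).symm) (f : Ob X),
    e ▸ act τ (act σ f) = act (τ.trans σ) f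
  /-- the strict equivariance axiom (EQ) -/
  act_pc : ∀ {X Y : Finset V} (x y : V) (hx : x ∈ X) (hy : y ∈ Y)
    (hd : Disjoint (X.erase x) (Y.erase y)) (σ σ₁ σ₂ : V ≃ V)
    (_ : ∀ v ∈ X.erase x, σ₁.symm v = σ.symm v)
    (_ : ∀ v ∈ Y.erase y, σ₂.symm v = σ.symm v)
    (hx' : σ₁.symm x ∈ X.image ⇑σ₁.symm) (hy' : σ₂.symm y ∈ Y.image ⇑σ₂.symm)
    (hd' : Disjoint ((X.image ⇑σ₁.symm).erase (σ₁.symm x))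
      ((Y.image ⇑σ₂.symm).erase (σ₂.symm y)))
    (e : (X.erase x ∪ Y.erase y).image ⇑σ.symm
        = (X.image ⇑σ₁.symm).erase (σ₁.symm x) ∪ (Y.image ⇑σ₂.symm).erase (σ₂.symm y))
    (f : Ob X) (g : Ob Y),
    e ▸ act σ (pc x y hx hy hd f g)
      = pc (σ₁.symm x) (σ₂.symm y) hx' hy' hd' (act σ₁ f) (act σ₂ g)
  /-- the coherence condition (βσ) -/
  act_bet : ∀ {X Y Z : Finset V} (x xb y yb : V)
    (hx : x ∈ X) (hxb : xb ∈ Y) (hy : y ∈ Y) (hyb : yb ∈ Z)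
    (d1 : Disjoint (X.erase x) (Y.erase xb))
    (hyU : y ∈ X.erase x ∪ Y.erase xb)
    (d2 : Disjoint ((X.erase x ∪ Y.erase xb).erase y) (Z.erase yb))
    (d3 : Disjoint (Y.erase y) (Z.erase yb))
    (hxbU : xb ∈ Y.erase y ∪ Z.erase yb)
    (d4 : Disjoint (X.erase x) ((Y.erase y ∪ Z.erase yb).erase xb))
    (σ σ₁ σ₂ σ₃ : V ≃ V)
    (_ : ∀ v ∈ X.erase x, σ₁.symm v = σ.symm v)
    (_ : ∀ v ∈ (Y.erase xb).erase y, σ₂.symm v = σ.symm v)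
    (_ : ∀ v ∈ Z.erase yb, σ₃.symm v = σ.symm v)
    (hx' : σ₁.symm x ∈ X.image ⇑σ₁.symm) (hxb' : σ₂.symm xb ∈ Y.image ⇑σ₂.symm)
    (hy' : σ₂.symm y ∈ Y.image ⇑σ₂.symm) (hyb' : σ₃.symm yb ∈ Z.image ⇑σ₃.symm)
    (d1' : Disjoint ((X.image ⇑σ₁.symm).erase (σ₁.symm x))
      ((Y.image ⇑σ₂.symm).erase (σ₂.symm xb)))
    (hyU' : σ₂.symm y ∈ (X.image ⇑σ₁.symm).erase (σ₁.symm x)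
      ∪ (Y.image ⇑σ₂.symm).erase (σ₂.symm xb))
    (d2' : Disjoint (((X.image ⇑σ₁.symm).erase (σ₁.symm x)
      ∪ (Y.image ⇑σ₂.symm).erase (σ₂.symm xb)).erase (σ₂.symm y))
      ((Z.image ⇑σ₃.symm).erase (σ₃.symm yb)))
    (d3' : Disjoint ((Y.image ⇑σ₂.symm).erase (σ₂.symm y))
      ((Z.image ⇑σ₃.symm).erase (σ₃.symm yb)))
    (hxbU' : σ₂.symm xb ∈ (Y.image ⇑σ₂.symm).erase (σ₂.symm y)
      ∪ (Z.image ⇑σ₃.symm).erase (σ₃.symm yb))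
    (d4' : Disjoint ((X.image ⇑σ₁.symm).erase (σ₁.symm x))
      (((Y.image ⇑σ₂.symm).erase (σ₂.symm y)
        ∪ (Z.image ⇑σ₃.symm).erase (σ₃.symm yb)).erase (σ₂.symm xb)))
    (f : Ob X) (g : Ob Y) (h : Ob Z),
    HEq (actH σ (bet x xb y yb hx hxb hy hyb d1 hyU d2 d3 hxbU d4 f g h))
      (bet (σ₁.symm x) (σ₂.symm xb) (σ₂.symm y) (σ₃.symm yb) hx' hxb' hy' hyb'
        d1' hyU' d2' d3' hxbU' d4' (act σ₁ f) (act σ₂ g) (act σ₃ h))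
  /-- the coherence condition (γσ) -/
  act_gam : ∀ {X Y : Finset V} (x y : V) (hx : x ∈ X) (hy : y ∈ Y)
    (hd : Disjoint (X.erase x) (Y.erase y)) (σ σ₁ σ₂ : V ≃ V)
    (_ : ∀ v ∈ X.erase x, σ₁.symm v = σ.symm v)
    (_ : ∀ v ∈ Y.erase y, σ₂.symm v = σ.symm v)
    (hx' : σ₁.symm x ∈ X.image ⇑σ₁.symm) (hy' : σ₂.symm y ∈ Y.image ⇑σ₂.symm)
    (hd' : Disjoint ((X.image ⇑σ₁.symm).erase (σ₁.symm x))
      ((Y.image ⇑σ₂.symm).erase (σ₂.symm y)))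
    (f : Ob X) (g : Ob Y),
    HEq (actH σ (gam x y hx hy hd f g))
      (gam (σ₁.symm x) (σ₂.symm y) hx' hy' hd' (act σ₁ f) (act σ₂ g))
  /-- the coherence condition (EQ-mor) -/
  act_pcH : ∀ {X X' Y Y' : Finset V} (x y : V)
    (hx : x ∈ X) (hx2 : x ∈ X') (hy : y ∈ Y) (hy2 : y ∈ Y')
    (hd : Disjoint (X.erase x) (Y.erase y)) (hd2 : Disjoint (X'.erase x) (Y'.erase y))
    (σ σ₁ σ₂ : V ≃ V)
    (_ : ∀ v ∈ X.erase x, σ₁.symm v = σ.symm v)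
    (_ : ∀ v ∈ Y.erase y, σ₂.symm v = σ.symm v)
    (hx' : σ₁.symm x ∈ X.image ⇑σ₁.symm) (hx2' : σ₁.symm x ∈ X'.image ⇑σ₁.symm)
    (hy' : σ₂.symm y ∈ Y.image ⇑σ₂.symm) (hy2' : σ₂.symm y ∈ Y'.image ⇑σ₂.symm)
    (hd' : Disjoint ((X.image ⇑σ₁.symm).erase (σ₁.symm x))
      ((Y.image ⇑σ₂.symm).erase (σ₂.symm y)))
    (hd2' : Disjoint ((X'.image ⇑σ₁.symm).erase (σ₁.symm x))
      ((Y'.image ⇑σ₂.symm).erase (σ₂.symm y)))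
    {f : Ob X} {f' : Ob X'} {g : Ob Y} {g' : Ob Y'}
    (φ : Hom f f') (ψ : Hom g g'),
    HEq (actH σ (pcH x y hx hx2 hy hy2 hd hd2 φ ψ))
      (pcH (σ₁.symm x) (σ₂.symm y) hx' hx2' hy' hy2' hd' hd2'
        (actH σ₁ φ) (actH σ₂ ψ))

end CatCyclicOperad

namespace CatCyclicOperad

variable {V : Type} [DecidableEq V]

/-- Object terms of the σ-free syntax `Free̲_C`, generated from parameters (operations of
`C`) by the formal partial compositions `ₓ□ᵧ`. -/
inductive OT (C : CECOE V) : Finset V → Type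
  | par {X : Finset V} : C.Ob X → OT C X
  | pc {X Y : Finset V} (x y : V) (hx : x ∈ X) (hy : y ∈ Y)
      (hd : Disjoint (X.erase x) (Y.erase y)) :
      OT C X → OT C Y → OT C (X.erase x ∪ Y.erase y)

/-- The interpretation `[−]_X` of σ-free object terms in `C`. -/
def interpO (C : CECOE V) : {X : Finset V} → OT C X → C.Ob X
  | _, .par a => a
  | _, .pc x y hx hy hd W₁ W₂ => C.pc x y hx hy hd (interpO C W₁) (interpO C W₂)

/-- `Ren C x x' W W'` : the object term `W'` is obtained from `W` by the substitution
`W[a^τ/a]`, where `a` is the (unique) parameter of `W` containing the free variable `x`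
and `τ` renames `x` to the fresh variable `x'`. -/
inductive Ren (C : CECOE V) (x x' : V) : {X X' : Finset V} → OT C X → OT C X' → Prop
  | par {X : Finset V} (a : C.Ob X) (hx : x ∈ X) (hx' : x' ∉ X)
      (e : X.image ⇑(Equiv.swap x x').symm = insert x' (X.erase x)) :
      Ren C x x' (.par a) (.par (e ▸ C.act (Equiv.swap x x') a))
  | pcL {X X' Y : Finset V} {W₁ : OT C X} {W₁' : OT C X'} {W₂ : OT C Y} (z w : V)
      (hz : z ∈ X) (hz' : z ∈ X') (hw : w ∈ Y)
      (hd : Disjoint (X.erase z) (Y.erase w)) (hd' : Disjoint (X'.erase z) (Y.erase w)) :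
      Ren C x x' W₁ W₁' →
      Ren C x x' (.pc z w hz hw hd W₁ W₂) (.pc z w hz' hw hd' W₁' W₂)
  | pcR {X Y Y' : Finset V} {W₁ : OT C X} {W₂ : OT C Y} {W₂' : OT C Y'} (z w : V)
      (hz : z ∈ X) (hw : w ∈ Y) (hw' : w ∈ Y')
      (hd : Disjoint (X.erase z) (Y.erase w)) (hd' : Disjoint (X.erase z) (Y'.erase w)) :
      Ren C x x' W₂ W₂' →
      Ren C x x' (.pc z w hz hw hd W₁ W₂) (.pc z w hz hw' hd' W₁ W₂')

/-- The α-equivalence `≡` on σ-free object terms: the smallest congruence with respect to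
the formal partial compositions generated by the simultaneous renaming of the pair of
composed variables to fresh ones inside the parameters containing them. -/
inductive AEq (C : CECOE V) : {X X' : Finset V} → OT C X → OT C X' → Prop
  | refl {X : Finset V} (W : OT C X) : AEq C W W
  | symm {X X' : Finset V} {W : OT C X} {W' : OT C X'} : AEq C W W' → AEq C W' W
  | trans {X X' X'' : Finset V} {W : OT C X} {W' : OT C X'} {W'' : OT C X''} :
      AEq C W W' → AEq C W' W'' → AEq C W W''
  | congr {X X' Y Y' : Finset V} {W₁ : OT C X} {W₁' : OT C X'} {W₂ : OT C Y}
      {W₂' : OT C Y'} (z w : V) (hz : z ∈ X) (hz' : z ∈ X') (hw : w ∈ Y) (hw' : w ∈ Y')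
      (hd : Disjoint (X.erase z) (Y.erase w)) (hd' : Disjoint (X'.erase z) (Y'.erase w)) :
      AEq C W₁ W₁' → AEq C W₂ W₂' →
      AEq C (.pc z w hz hw hd W₁ W₂) (.pc z w hz' hw' hd' W₁' W₂')
  | rename {X X' Y Y' : Finset V} {W₁ : OT C X} {W₁' : OT C X'} {W₂ : OT C Y}
      {W₂' : OT C Y'} (z w z' w' : V) (hz : z ∈ X) (hz' : z' ∈ X') (hw : w ∈ Y)
      (hw' : w' ∈ Y')
      (hd : Disjoint (X.erase z) (Y.erase w)) (hd' : Disjoint (X'.erase z') (Y'.erase w')) :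
      Ren C z z' W₁ W₁' → Ren C w w' W₂ W₂' →
      z' ∉ X.erase z ∪ Y.erase w → w' ∉ X.erase z ∪ Y.erase w → z' ≠ w' →
      AEq C (.pc z w hz hw hd W₁ W₂) (.pc z' w' hz' hw' hd' W₁' W₂')

/-- Arrow terms of the σ-free syntax `Free̲_C`: identities, formal composition, parallel
compositions, and the components of `β`, `β⁻¹` and `γ`. -/
inductive AT (C : CECOE V) : {X X' : Finset V} → OT C X → OT C X' → Type
  | id {X : Finset V} (W : OT C X) : AT C W W
  | comp {X₁ X₂ X₃ : Finset V} {U : OT C X₁} {Vm : OT C X₂} {W : OT C X₃} :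
      AT C Vm W → AT C U Vm → AT C U W
  | pcH {X X' Y Y' : Finset V} (x y : V) (hx : x ∈ X) (hx' : x ∈ X') (hy : y ∈ Y)
      (hy' : y ∈ Y') (hd : Disjoint (X.erase x) (Y.erase y))
      (hd' : Disjoint (X'.erase x) (Y'.erase y))
      {f : OT C X} {f' : OT C X'} {g : OT C Y} {g' : OT C Y'} :
      AT C f f' → AT C g g' → AT C (.pc x y hx hy hd f g) (.pc x y hx' hy' hd' f' g')
  | gam {X Y : Finset V} (x y : V) (hx : x ∈ X) (hy : y ∈ Y)
      (hd : Disjoint (X.erase x) (Y.erase y)) (f : OT C X) (g : OT C Y) :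
      AT C (.pc x y hx hy hd f g) (.pc y x hy hx hd.symm g f)
  | bet {X Y Z : Finset V} (x xb y yb : V)
      (hx : x ∈ X) (hxb : xb ∈ Y) (hy : y ∈ Y) (hyb : yb ∈ Z)
      (d1 : Disjoint (X.erase x) (Y.erase xb))
      (hyU : y ∈ X.erase x ∪ Y.erase xb)
      (d2 : Disjoint ((X.erase x ∪ Y.erase xb).erase y) (Z.erase yb))
      (d3 : Disjoint (Y.erase y) (Z.erase yb))
      (hxbU : xb ∈ Y.erase y ∪ Z.erase yb)
      (d4 : Disjoint (X.erase x) ((Y.erase y ∪ Z.erase yb).erase xb))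
      (f : OT C X) (g : OT C Y) (h : OT C Z) :
      AT C (.pc y yb hyU hyb d2 (.pc x xb hx hxb d1 f g) h)
           (.pc x xb hx hxbU d4 f (.pc y yb hy hyb d3 g h))
  | betInv {X Y Z : Finset V} (x xb y yb : V)
      (hx : x ∈ X) (hxb : xb ∈ Y) (hy : y ∈ Y) (hyb : yb ∈ Z)
      (d1 : Disjoint (X.erase x) (Y.erase xb))
      (hyU : y ∈ X.erase x ∪ Y.erase xb)
      (d2 : Disjoint ((X.erase x ∪ Y.erase xb).erase y) (Z.erase yb))
      (d3 : Disjoint (Y.erase y) (Z.erase yb))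
      (hxbU : xb ∈ Y.erase y ∪ Z.erase yb)
      (d4 : Disjoint (X.erase x) ((Y.erase y ∪ Z.erase yb).erase xb))
      (f : OT C X) (g : OT C Y) (h : OT C Z) :
      AT C (.pc x xb hx hxbU d4 f (.pc y yb hy hyb d3 g h))
           (.pc y yb hyU hyb d2 (.pc x xb hx hxb d1 f g) h)

/-- The interpretation of σ-free arrow terms in `C`. -/
def interpA (C : CECOE V) : {X X' : Finset V} → {U : OT C X} → {W : OT C X'} →
    AT C U W → C.Hom (interpO C U) (interpO C W)
  | _, _, _, _, .id W => C.vid (interpO C W)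
  | _, _, _, _, .comp φ ψ => C.vcomp (interpA C φ) (interpA C ψ)
  | _, _, _, _, .pcH x y hx hx' hy hy' hd hd' φ ψ =>
      C.pcH x y hx hx' hy hy' hd hd' (interpA C φ) (interpA C ψ)
  | _, _, _, _, .gam x y hx hy hd f g =>
      C.gam x y hx hy hd (interpO C f) (interpO C g)
  | _, _, _, _, .bet x xb y yb hx hxb hy hyb d1 hyU d2 d3 hxbU d4 f g h =>
      C.bet x xb y yb hx hxb hy hyb d1 hyU d2 d3 hxbU d4
        (interpO C f) (interpO C g) (interpO C h)
  | _, _, _, _, .betInv x xb y yb hx hxb hy hyb d1 hyU d2 d3 hxbU d4 f g h =>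
      C.betInv x xb y yb hx hxb hy hyb d1 hyU d2 d3 hxbU d4
        (interpO C f) (interpO C g) (interpO C h)

/-- Renaming of a variable in an index. -/
def rn (x x' v : V) : V := if v = x then x' else v

/-- The substitution `φ[a^τ/a]` on arrow terms, presented as a relation: the indices of
`φ` are modified as dictated by the substitution on its source (Example 2.12 of the
paper). -/
inductive RenA (C : CECOE V) (x x' : V) :
    {X₁ X₂ X₃ X₄ : Finset V} → {U : OT C X₁} → {W : OT C X₂} → {U' : OT C X₃} →
    {W' : OT C X₄} → AT C U W → AT C U' W' → Prop
  | id {X X' : Finset V} {W : OT C X} {W' : OT C X'} :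
      Ren C x x' W W' → RenA C x x' (AT.id W) (AT.id W')
  | comp {Xa Xb Xc Xd Xe Xf : Finset V} {U : OT C Xa} {Vm : OT C Xb} {W : OT C Xc}
      {U' : OT C Xd} {Vm' : OT C Xe} {W' : OT C Xf}
      {φ₂ : AT C Vm W} {φ₁ : AT C U Vm} {φ₂' : AT C Vm' W'} {φ₁' : AT C U' Vm'} :
      RenA C x x' φ₂ φ₂' → RenA C x x' φ₁ φ₁' →
      RenA C x x' (AT.comp φ₂ φ₁) (AT.comp φ₂' φ₁')
  | pcH {X X' Y Y' X₂ X₂' Y₂ Y₂' : Finset V} (z w : V)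
      {f : OT C X} {f' : OT C X'} {g : OT C Y} {g' : OT C Y'}
      {f₂ : OT C X₂} {f₂' : OT C X₂'} {g₂ : OT C Y₂} {g₂' : OT C Y₂'}
      (hz : z ∈ X) (hz' : z ∈ X') (hw : w ∈ Y) (hw' : w ∈ Y')
      (hd : Disjoint (X.erase z) (Y.erase w)) (hd' : Disjoint (X'.erase z) (Y'.erase w))
      (hz₂ : rn x x' z ∈ X₂) (hz₂' : rn x x' z ∈ X₂')
      (hw₂ : rn x x' w ∈ Y₂) (hw₂' : rn x x' w ∈ Y₂')
      (hd₂ : Disjoint (X₂.erase (rn x x' z)) (Y₂.erase (rn x x' w)))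
      (hd₂' : Disjoint (X₂'.erase (rn x x' z)) (Y₂'.erase (rn x x' w)))
      {φ : AT C f f'} {φ' : AT C f₂ f₂'} {ψ : AT C g g'} {ψ' : AT C g₂ g₂'} :
      RenA C x x' φ φ' → RenA C x x' ψ ψ' →
      RenA C x x' (AT.pcH z w hz hz' hw hw' hd hd' φ ψ)
        (AT.pcH (rn x x' z) (rn x x' w) hz₂ hz₂' hw₂ hw₂' hd₂ hd₂' φ' ψ')
  | gam {X Y X₂ Y₂ : Finset V} (z w : V) {f : OT C X} {g : OT C Y} {f' : OT C X₂}
      {g' : OT C Y₂} (hz : z ∈ X) (hw : w ∈ Y)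
      (hd : Disjoint (X.erase z) (Y.erase w))
      (hz₂ : rn x x' z ∈ X₂) (hw₂ : rn x x' w ∈ Y₂)
      (hd₂ : Disjoint (X₂.erase (rn x x' z)) (Y₂.erase (rn x x' w))) :
      Ren C x x' f f' → Ren C x x' g g' →
      RenA C x x' (AT.gam z w hz hw hd f g)
        (AT.gam (rn x x' z) (rn x x' w) hz₂ hw₂ hd₂ f' g')
  | bet {X Y Z X₂ Y₂ Z₂ : Finset V} (z zb w wb : V)
      {f : OT C X} {g : OT C Y} {h : OT C Z}
      {f' : OT C X₂} {g' : OT C Y₂} {h' : OT C Z₂}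
      (hz : z ∈ X) (hzb : zb ∈ Y) (hw : w ∈ Y) (hwb : wb ∈ Z)
      (d1 : Disjoint (X.erase z) (Y.erase zb))
      (hwU : w ∈ X.erase z ∪ Y.erase zb)
      (d2 : Disjoint ((X.erase z ∪ Y.erase zb).erase w) (Z.erase wb))
      (d3 : Disjoint (Y.erase w) (Z.erase wb))
      (hzbU : zb ∈ Y.erase w ∪ Z.erase wb)
      (d4 : Disjoint (X.erase z) ((Y.erase w ∪ Z.erase wb).erase zb))
      (hz₂ : rn x x' z ∈ X₂) (hzb₂ : rn x x' zb ∈ Y₂) (hw₂ : rn x x' w ∈ Y₂)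
      (hwb₂ : rn x x' wb ∈ Z₂)
      (d1₂ : Disjoint (X₂.erase (rn x x' z)) (Y₂.erase (rn x x' zb)))
      (hwU₂ : rn x x' w ∈ X₂.erase (rn x x' z) ∪ Y₂.erase (rn x x' zb))
      (d2₂ : Disjoint ((X₂.erase (rn x x' z) ∪ Y₂.erase (rn x x' zb)).erase (rn x x' w))
        (Z₂.erase (rn x x' wb)))
      (d3₂ : Disjoint (Y₂.erase (rn x x' w)) (Z₂.erase (rn x x' wb)))
      (hzbU₂ : rn x x' zb ∈ Y₂.erase (rn x x' w) ∪ Z₂.erase (rn x x' wb))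
      (d4₂ : Disjoint (X₂.erase (rn x x' z))
        ((Y₂.erase (rn x x' w) ∪ Z₂.erase (rn x x' wb)).erase (rn x x' zb))) :
      Ren C x x' f f' → Ren C x x' g g' → Ren C x x' h h' →
      RenA C x x' (AT.bet z zb w wb hz hzb hw hwb d1 hwU d2 d3 hzbU d4 f g h)
        (AT.bet (rn x x' z) (rn x x' zb) (rn x x' w) (rn x x' wb)
          hz₂ hzb₂ hw₂ hwb₂ d1₂ hwU₂ d2₂ d3₂ hzbU₂ d4₂ f' g' h')

def IsActImage (C : CECOE V) (σ : V ≃ V) {X X₂ : Finset V} (f : C.Ob X) (f₂ : C.Ob X₂) :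
    Prop :=
  X₂ = X.image σ.symm ∧ HEq f₂ (C.act σ f)

section Action

variable {C : CECOE V}

theorem isActImage_one {X : Finset V} (f : C.Ob X) : IsActImage C 1 f f := by
  have hX : X.image ⇑(1 : V ≃ V).symm = X := Finset.image_id
  exact ⟨hX.symm, (heq_of_eq (C.act_one hX f)).symm.trans (eqRec_heq hX _)⟩

theorem image_erase_union_image_erase (σ σ₁ σ₂ : V ≃ V) {X Y : Finset V} {z w : V}
    (h₁ : ∀ v ∈ X.erase z, σ₁.symm v = σ.symm v) (h₂ : ∀ v ∈ Y.erase w, σ₂.symm v = σ.symm v) :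
    (X.erase z ∪ Y.erase w).image σ.symm
      = (X.image σ₁.symm).erase (σ₁.symm z) ∪ (Y.image σ₂.symm).erase (σ₂.symm w) := by
  rw [Finset.image_union, ← Finset.image_erase σ₁.symm.injective,
    ← Finset.image_erase σ₂.symm.injective, Finset.image_congr (fun v hv => h₁ v hv),
    Finset.image_congr (fun v hv => h₂ v hv)]

theorem isActImage_pc (σ σ₁ σ₂ : V ≃ V) {X Y X₂ Y₂ : Finset V} {z w z₂ w₂ : V}
    (hz : z ∈ X) (hw : w ∈ Y) (hd : Disjoint (X.erase z) (Y.erase w))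
    (hz₂ : z₂ ∈ X₂) (hw₂ : w₂ ∈ Y₂) (hd₂ : Disjoint (X₂.erase z₂) (Y₂.erase w₂))
    (h₁ : ∀ v ∈ X.erase z, σ₁.symm v = σ.symm v) (h₂ : ∀ v ∈ Y.erase w, σ₂.symm v = σ.symm v)
    (hzσ : z₂ = σ₁.symm z) (hwσ : w₂ = σ₂.symm w)
    {f : C.Ob X} {g : C.Ob Y} {f₂ : C.Ob X₂} {g₂ : C.Ob Y₂}
    (hf : IsActImage C σ₁ f f₂) (hg : IsActImage C σ₂ g g₂) :
    IsActImage C σ (C.pc z w hz hw hd f g) (C.pc z₂ w₂ hz₂ hw₂ hd₂ f₂ g₂) := by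
  obtain ⟨rfl, hf⟩ := hf
  obtain ⟨rfl, hg⟩ := hg
  subst hzσ hwσ hf hg
  have e := image_erase_union_image_erase σ σ₁ σ₂ h₁ h₂
  exact ⟨e.symm, (heq_of_eq (C.act_pc z w hz hw hd σ σ₁ σ₂ h₁ h₂ hz₂ hw₂ hd₂ e f g)).symm.trans
    (eqRec_heq e _)⟩

theorem heq_actH_vid (σ : V ≃ V) {X X₂ : Finset V} {f : C.Ob X} {f₂ : C.Ob X₂}
    (hf : IsActImage C σ f f₂) : HEq (C.vid f₂) (C.actH σ (C.vid f)) := by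
  obtain ⟨rfl, hf⟩ := hf
  subst hf
  rw [C.actH_vid]

theorem heq_actH_vcomp (σ : V ≃ V) {S T U S₂ T₂ U₂ : Finset V}
    {f : C.Ob S} {g : C.Ob T} {h : C.Ob U} {f₂ : C.Ob S₂} {g₂ : C.Ob T₂} {h₂ : C.Ob U₂}
    (hf : IsActImage C σ f f₂) (hg : IsActImage C σ g g₂) (hh : IsActImage C σ h h₂)
    {φ : C.Hom g h} {ψ : C.Hom f g} {φ₂ : C.Hom g₂ h₂} {ψ₂ : C.Hom f₂ g₂}
    (hφ : HEq φ₂ (C.actH σ φ)) (hψ : HEq ψ₂ (C.actH σ ψ)) :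
    HEq (C.vcomp φ₂ ψ₂) (C.actH σ (C.vcomp φ ψ)) := by
  obtain ⟨rfl, hf⟩ := hf
  obtain ⟨rfl, hg⟩ := hg
  obtain ⟨rfl, hh⟩ := hh
  subst hf hg hh hφ hψ
  rw [C.actH_vcomp]

theorem heq_actH_pcH (σ : V ≃ V) {X X' Y Y' X₂ X₂' Y₂ Y₂' : Finset V} {z w z₂ w₂ : V}
    (hz : z ∈ X) (hz' : z ∈ X') (hw : w ∈ Y) (hw' : w ∈ Y')
    (hd : Disjoint (X.erase z) (Y.erase w)) (hd' : Disjoint (X'.erase z) (Y'.erase w))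
    (hz₂ : z₂ ∈ X₂) (hz₂' : z₂ ∈ X₂') (hw₂ : w₂ ∈ Y₂) (hw₂' : w₂ ∈ Y₂')
    (hd₂ : Disjoint (X₂.erase z₂) (Y₂.erase w₂))
    (hd₂' : Disjoint (X₂'.erase z₂) (Y₂'.erase w₂))
    (hzσ : z₂ = σ.symm z) (hwσ : w₂ = σ.symm w)
    {f : C.Ob X} {f' : C.Ob X'} {g : C.Ob Y} {g' : C.Ob Y'}
    {f₂ : C.Ob X₂} {f₂' : C.Ob X₂'} {g₂ : C.Ob Y₂} {g₂' : C.Ob Y₂'}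
    (hf : IsActImage C σ f f₂) (hf' : IsActImage C σ f' f₂')
    (hg : IsActImage C σ g g₂) (hg' : IsActImage C σ g' g₂')
    {φ : C.Hom f f'} {ψ : C.Hom g g'} {φ₂ : C.Hom f₂ f₂'} {ψ₂ : C.Hom g₂ g₂'}
    (hφ : HEq φ₂ (C.actH σ φ)) (hψ : HEq ψ₂ (C.actH σ ψ)) :
    HEq (C.pcH z₂ w₂ hz₂ hz₂' hw₂ hw₂' hd₂ hd₂' φ₂ ψ₂)
      (C.actH σ (C.pcH z w hz hz' hw hw' hd hd' φ ψ)) := by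
  obtain ⟨rfl, hf⟩ := hf
  obtain ⟨rfl, hf'⟩ := hf'
  obtain ⟨rfl, hg⟩ := hg
  obtain ⟨rfl, hg'⟩ := hg'
  subst hzσ hwσ hf hf' hg hg' hφ hψ
  exact (C.act_pcH z w hz hz' hw hw' hd hd' σ σ σ (fun _ _ => rfl) (fun _ _ => rfl)
    hz₂ hz₂' hw₂ hw₂' hd₂ hd₂' φ ψ).symm

theorem heq_actH_gam (σ : V ≃ V) {X Y X₂ Y₂ : Finset V} {z w z₂ w₂ : V}
    (hz : z ∈ X) (hw : w ∈ Y) (hd : Disjoint (X.erase z) (Y.erase w))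
    (hz₂ : z₂ ∈ X₂) (hw₂ : w₂ ∈ Y₂) (hd₂ : Disjoint (X₂.erase z₂) (Y₂.erase w₂))
    (hzσ : z₂ = σ.symm z) (hwσ : w₂ = σ.symm w)
    {f : C.Ob X} {g : C.Ob Y} {f₂ : C.Ob X₂} {g₂ : C.Ob Y₂}
    (hf : IsActImage C σ f f₂) (hg : IsActImage C σ g g₂) :
    HEq (C.gam z₂ w₂ hz₂ hw₂ hd₂ f₂ g₂) (C.actH σ (C.gam z w hz hw hd f g)) := by
  obtain ⟨rfl, hf⟩ := hf
  obtain ⟨rfl, hg⟩ := hg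
  subst hzσ hwσ hf hg
  exact (C.act_gam z w hz hw hd σ σ σ (fun _ _ => rfl) (fun _ _ => rfl) hz₂ hw₂ hd₂ f g).symm

theorem heq_actH_bet (σ : V ≃ V) {X Y Z X₂ Y₂ Z₂ : Finset V} {z zb w wb z₂ zb₂ w₂ wb₂ : V}
    (hz : z ∈ X) (hzb : zb ∈ Y) (hw : w ∈ Y) (hwb : wb ∈ Z)
    (d1 : Disjoint (X.erase z) (Y.erase zb))
    (hwU : w ∈ X.erase z ∪ Y.erase zb)
    (d2 : Disjoint ((X.erase z ∪ Y.erase zb).erase w) (Z.erase wb))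
    (d3 : Disjoint (Y.erase w) (Z.erase wb))
    (hzbU : zb ∈ Y.erase w ∪ Z.erase wb)
    (d4 : Disjoint (X.erase z) ((Y.erase w ∪ Z.erase wb).erase zb))
    (hz₂ : z₂ ∈ X₂) (hzb₂ : zb₂ ∈ Y₂) (hw₂ : w₂ ∈ Y₂) (hwb₂ : wb₂ ∈ Z₂)
    (d1₂ : Disjoint (X₂.erase z₂) (Y₂.erase zb₂))
    (hwU₂ : w₂ ∈ X₂.erase z₂ ∪ Y₂.erase zb₂)
    (d2₂ : Disjoint ((X₂.erase z₂ ∪ Y₂.erase zb₂).erase w₂) (Z₂.erase wb₂))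
    (d3₂ : Disjoint (Y₂.erase w₂) (Z₂.erase wb₂))
    (hzbU₂ : zb₂ ∈ Y₂.erase w₂ ∪ Z₂.erase wb₂)
    (d4₂ : Disjoint (X₂.erase z₂) ((Y₂.erase w₂ ∪ Z₂.erase wb₂).erase zb₂))
    (hzσ : z₂ = σ.symm z) (hzbσ : zb₂ = σ.symm zb) (hwσ : w₂ = σ.symm w)
    (hwbσ : wb₂ = σ.symm wb)
    {f : C.Ob X} {g : C.Ob Y} {h : C.Ob Z} {f₂ : C.Ob X₂} {g₂ : C.Ob Y₂} {h₂ : C.Ob Z₂}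
    (hf : IsActImage C σ f f₂) (hg : IsActImage C σ g g₂) (hh : IsActImage C σ h h₂) :
    HEq (C.bet z₂ zb₂ w₂ wb₂ hz₂ hzb₂ hw₂ hwb₂ d1₂ hwU₂ d2₂ d3₂ hzbU₂ d4₂ f₂ g₂ h₂)
      (C.actH σ (C.bet z zb w wb hz hzb hw hwb d1 hwU d2 d3 hzbU d4 f g h)) := by
  obtain ⟨rfl, hf⟩ := hf
  obtain ⟨rfl, hg⟩ := hg
  obtain ⟨rfl, hh⟩ := hh
  subst hzσ hzbσ hwσ hwbσ hf hg hh
  exact (C.act_bet z zb w wb hz hzb hw hwb d1 hwU d2 d3 hzbU d4 σ σ σ σ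
    (fun _ _ => rfl) (fun _ _ => rfl) (fun _ _ => rfl)
    hz₂ hzb₂ hw₂ hwb₂ d1₂ hwU₂ d2₂ d3₂ hzbU₂ d4₂ f g h).symm

end Action

theorem rn_eq_swap_symm {x x' z : V} (h : z ≠ x') : rn x x' z = (Equiv.swap x x').symm z := by
  rw [Equiv.symm_swap, rn]
  split_ifs with hz
  · rw [hz, Equiv.swap_apply_left]
  · exact (Equiv.swap_apply_of_ne_of_ne hz h).symm

theorem ne_of_mem_image_swap_symm {x x' z : V} {X : Finset V} (hx' : x' ∉ X)
    (hz : z ∈ X.image (Equiv.swap x x').symm) : z ≠ x := by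
  rintro rfl
  obtain ⟨v, hv, hvz⟩ := Finset.mem_image.mp hz
  rw [Equiv.symm_swap, Equiv.swap_apply_eq_iff, Equiv.swap_apply_left] at hvz
  exact hx' (hvz ▸ hv)

theorem right_mem_image_swap_symm {x x' : V} {X : Finset V} (hx : x ∈ X) :
    x' ∈ X.image (Equiv.swap x x').symm :=
  Finset.mem_image.mpr ⟨x, hx, by rw [Equiv.symm_swap, Equiv.swap_apply_left]⟩

theorem one_symm_apply_eq_swap_symm_apply {x x' : V} {S : Finset V} (hx : x ∉ S) (hx' : x' ∉ S)
    (v : V) (hv : v ∈ S) : (1 : V ≃ V).symm v = (Equiv.swap x x').symm v := by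
  rw [Equiv.symm_swap]
  exact (Equiv.swap_apply_of_ne_of_ne (ne_of_mem_of_not_mem hv hx)
    (ne_of_mem_of_not_mem hv hx')).symm

/-- Freshness of `x'` is what makes the index renaming `rn x x'` agree with `swap x x'`. -/
structure SwapInterp (C : CECOE V) (x x' : V) {X X' : Finset V} (W : OT C X) (W' : OT C X') :
    Prop where
  fresh : x' ∉ X
  isActImage : IsActImage C (Equiv.swap x x') (interpO C W) (interpO C W')

structure SwapInterpA (C : CECOE V) (x x' : V) {X₁ X₂ X₃ X₄ : Finset V} {U : OT C X₁}
    {W : OT C X₂} {U' : OT C X₃} {W' : OT C X₄} (φ : AT C U W) (φ' : AT C U' W') : Prop where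
  source : SwapInterp C x x' U U'
  target : SwapInterp C x x' W W'
  interp_heq : HEq (interpA C φ') (C.actH (Equiv.swap x x') (interpA C φ))

section Substitution

variable {C : CECOE V} {x x' : V}

theorem SwapInterp.rn_eq {X X' : Finset V} {W : OT C X} {W' : OT C X'}
    (hW : SwapInterp C x x' W W') {z : V} (hz : z ∈ X) : rn x x' z = (Equiv.swap x x').symm z :=
  rn_eq_swap_symm fun h => hW.fresh (h ▸ hz)

theorem SwapInterp.pc {X Y X₂ Y₂ : Finset V} {f : OT C X} {g : OT C Y} {f₂ : OT C X₂}
    {g₂ : OT C Y₂} (hf : SwapInterp C x x' f f₂) (hg : SwapInterp C x x' g g₂) {z w : V}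
    (hz : z ∈ X) (hw : w ∈ Y) (hd : Disjoint (X.erase z) (Y.erase w))
    (hz₂ : rn x x' z ∈ X₂) (hw₂ : rn x x' w ∈ Y₂)
    (hd₂ : Disjoint (X₂.erase (rn x x' z)) (Y₂.erase (rn x x' w))) :
    SwapInterp C x x' (.pc z w hz hw hd f g) (.pc (rn x x' z) (rn x x' w) hz₂ hw₂ hd₂ f₂ g₂) where
  fresh := by simp [hf.fresh, hg.fresh]
  isActImage := isActImage_pc _ _ _ hz hw hd hz₂ hw₂ hd₂ (fun _ _ => rfl) (fun _ _ => rfl)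
    (hf.rn_eq hz) (hg.rn_eq hw) hf.isActImage hg.isActImage

theorem Ren.mem_and_swapInterp {X X' : Finset V} {W : OT C X} {W' : OT C X'}
    (h : Ren C x x' W W') : x ∈ X ∧ SwapInterp C x x' W W' := by
  induction h with
  | par a hx hx' e => exact ⟨hx, hx', e.symm, eqRec_heq e _⟩
  | @pcL X X' Y W₁ W₁' W₂ z w hz hz' hw hd hd' _ ih =>
    obtain ⟨hx, hx', hX', hW₁⟩ := ih
    subst hX'
    have hzx := ne_of_mem_image_swap_symm hx' hz'
    have hzx' := ne_of_mem_of_not_mem hz hx'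
    have hxz : x ∈ X.erase z := Finset.mem_erase.mpr ⟨hzx.symm, hx⟩
    have hx'z := Finset.mem_erase.mpr ⟨hzx'.symm, right_mem_image_swap_symm hx⟩
    have hxY := Finset.disjoint_left.mp hd hxz
    have hx'Y := Finset.disjoint_left.mp hd' hx'z
    refine ⟨Finset.mem_union_left _ hxz, by simp [hx', hx'Y], ?_⟩
    exact isActImage_pc _ _ _ hz hw hd hz' hw hd' (fun _ _ => rfl)
      (one_symm_apply_eq_swap_symm_apply hxY hx'Y)
      (by rw [Equiv.symm_swap, Equiv.swap_apply_of_ne_of_ne hzx hzx']) rfl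
      ⟨rfl, hW₁⟩ (isActImage_one _)
  | @pcR X Y Y' W₁ W₂ W₂' z w hz hw hw' hd hd' _ ih =>
    obtain ⟨hx, hx', hY', hW₂⟩ := ih
    subst hY'
    have hwx := ne_of_mem_image_swap_symm hx' hw'
    have hwx' := ne_of_mem_of_not_mem hw hx'
    have hxw : x ∈ Y.erase w := Finset.mem_erase.mpr ⟨hwx.symm, hx⟩
    have hx'w := Finset.mem_erase.mpr ⟨hwx'.symm, right_mem_image_swap_symm hx⟩
    have hxX := Finset.disjoint_right.mp hd hxw
    have hx'X := Finset.disjoint_right.mp hd' hx'w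
    refine ⟨Finset.mem_union_right _ hxw, by simp [hx', hx'X], ?_⟩
    exact isActImage_pc _ _ _ hz hw hd hz hw' hd' (one_symm_apply_eq_swap_symm_apply hxX hx'X)
      (fun _ _ => rfl) rfl (by rw [Equiv.symm_swap, Equiv.swap_apply_of_ne_of_ne hwx hwx'])
      (isActImage_one _) ⟨rfl, hW₂⟩

theorem RenA.swapInterpA {X₁ X₂ X₃ X₄ : Finset V} {U : OT C X₁} {W : OT C X₂} {U' : OT C X₃}
    {W' : OT C X₄} {φ : AT C U W} {φ' : AT C U' W'} (h : RenA C x x' φ φ') :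
    SwapInterpA C x x' φ φ' := by
  induction h with
  | id hr =>
    have hW := hr.mem_and_swapInterp.2
    exact ⟨hW, hW, heq_actH_vid _ hW.isActImage⟩
  | comp _ _ ih₂ ih₁ =>
    exact ⟨ih₁.source, ih₂.target, heq_actH_vcomp _ ih₁.source.isActImage
      ih₁.target.isActImage ih₂.target.isActImage ih₂.interp_heq ih₁.interp_heq⟩
  | pcH z w hz hz' hw hw' hd hd' hz₂ hz₂' hw₂ hw₂' hd₂ hd₂' _ _ ihφ ihψ =>
    exact ⟨ihφ.source.pc ihψ.source hz hw hd hz₂ hw₂ hd₂,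
      ihφ.target.pc ihψ.target hz' hw' hd' hz₂' hw₂' hd₂',
      heq_actH_pcH _ hz hz' hw hw' hd hd' hz₂ hz₂' hw₂ hw₂' hd₂ hd₂'
        (ihφ.source.rn_eq hz) (ihψ.source.rn_eq hw) ihφ.source.isActImage
        ihφ.target.isActImage ihψ.source.isActImage ihψ.target.isActImage
        ihφ.interp_heq ihψ.interp_heq⟩
  | gam z w hz hw hd hz₂ hw₂ hd₂ rf rg =>
    have hf := rf.mem_and_swapInterp.2
    have hg := rg.mem_and_swapInterp.2
    exact ⟨hf.pc hg hz hw hd hz₂ hw₂ hd₂, hg.pc hf hw hz hd.symm hw₂ hz₂ hd₂.symm,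
      heq_actH_gam _ hz hw hd hz₂ hw₂ hd₂ (hf.rn_eq hz) (hg.rn_eq hw) hf.isActImage
        hg.isActImage⟩
  | bet z zb w wb hz hzb hw hwb d1 hwU d2 d3 hzbU d4 hz₂ hzb₂ hw₂ hwb₂ d1₂ hwU₂ d2₂ d3₂ hzbU₂
      d4₂ rf rg rh =>
    have hf := rf.mem_and_swapInterp.2
    have hg := rg.mem_and_swapInterp.2
    have hh := rh.mem_and_swapInterp.2
    exact ⟨(hf.pc hg hz hzb d1 hz₂ hzb₂ d1₂).pc hh hwU hwb d2 hwU₂ hwb₂ d2₂,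
      hf.pc (hg.pc hh hw hwb d3 hw₂ hwb₂ d3₂) hz hzbU d4 hz₂ hzbU₂ d4₂,
      heq_actH_bet _ hz hzb hw hwb d1 hwU d2 d3 hzbU d4 hz₂ hzb₂ hw₂ hwb₂ d1₂ hwU₂ d2₂ d3₂
        hzbU₂ d4₂ (hf.rn_eq hz) (hg.rn_eq hzb) (hg.rn_eq hw) (hh.rn_eq hwb) hf.isActImage
        hg.isActImage hh.isActImage⟩

end Substitution

/-- **Lemma 2.13 of the paper**: substitution of a renamed parameter corresponds to the
bijection action on the interpretation: if `W` is an object term of type `X` of the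
σ-free syntax, `x ∈ X`, `a` a parameter of `W` with `x ∈ FV(a)`, and `τ` renames `x` to
a fresh `x'`, then `[W[a^τ/a]] = [W]^σ`, where `σ` renames `x` to `x'` in `X`; and for
any arrow term `φ` with source `W`, `[φ[a^τ/a]] = [φ]^σ`. -/
theorem interp_of_substitution (C : CECOE V) (x x' : V) :
    (∀ {X X' : Finset V} (W : OT C X) (W' : OT C X'), Ren C x x' W W' →
      ∀ e : X.image ⇑(Equiv.swap x x').symm = X',
        interpO C W' = e ▸ C.act (Equiv.swap x x') (interpO C W)) ∧
    (∀ {X₁ X₂ X₃ X₄ : Finset V} {U : OT C X₁} {W : OT C X₂} {U' : OT C X₃}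
      {W' : OT C X₄} (φ : AT C U W) (φ' : AT C U' W'), RenA C x x' φ φ' →
        HEq (interpA C φ') (C.actH (Equiv.swap x x') (interpA C φ))) := by
  refine ⟨fun W W' h e => ?_, fun φ φ' h => h.swapInterpA.interp_heq⟩
  obtain ⟨-, -, -, hW⟩ := h.mem_and_swapInterp
  subst e
  exact eq_of_heq hW

end CatCyclicOperad
end

section
/- Second reduction compatibility (key case): in a categorified entries-only cyclic operad, for operations f₁, f₂, f₃ and morphisms κ₁ : f₁ → f₁•, κ₂ : f₂ → f₂•, κ₃ : f₃ → f₃•, the diagram obtained by composing γ^{y,ȳ}_{f₁ z∘_{z̄} f₂, f₃}, then 1_{f₃} ȳ∘ᵧ γ^{z,z̄}_{f₁,f₂}, then (β^{ȳ,y;z̄,z}_{f₃•,f₂•,f₁•})⁻¹ ∘ (κ₃ ȳ∘ᵧ (κ₂ z̄∘_z κ₁)) equals the composite ((κ₃ ȳ∘ᵧ κ₂) z̄∘_z κ₁) ∘ (γ^{y,ȳ}_{f₂,f₃} z̄∘_z 1_{f₁}) ∘ γ^{z,z̄}_{f₁, f₂ ᵧ∘_{ȳ} f₃} ∘ β^{z,z̄;y,ȳ}_{f₁,f₂,f₃},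 as morphisms (f₁ z∘_{z̄} f₂) ᵧ∘_{ȳ} f₃ → (f₃• ȳ∘ᵧ f₂•) z̄∘_z f₁•. -/
namespace CatCyclicOperad

variable {V : Type} [DecidableEq V]

/-- The key case of the second reduction (Theorem 2.21 of the paper, case `x ∈ X₃`):
in a categorified entries-only cyclic operad, for operations `f₁, f₂, f₃` and morphisms
`κᵢ : fᵢ → fᵢ•`, the composite
`(β^{ȳ,y;z̄,z}_{f₃•,f₂•,f₁•})⁻¹ ∘ (κ₃ ȳ∘ᵧ (κ₂ z̄∘_z κ₁)) ∘ (1_{f₃} ȳ∘ᵧ γ^{z,z̄}_{f₁,f₂}) ∘ γ^{y,ȳ}_{f₁ ₓ∘_z̄ f₂, f₃}`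
equals
`((κ₃ ȳ∘ᵧ κ₂) z̄∘_z κ₁) ∘ (γ^{y,ȳ}_{f₂,f₃} z̄∘_z 1_{f₁}) ∘ γ^{z,z̄}_{f₁, f₂ ᵧ∘_ȳ f₃} ∘ β^{z,z̄;y,ȳ}_{f₁,f₂,f₃}`,
as morphisms `(f₁ ₓ∘_z̄ f₂) ᵧ∘_ȳ f₃ → (f₃• ȳ∘ᵧ f₂•) z̄∘_z f₁•`. -/
theorem second_reduction_key_case (C : CECO V) {X₁ X₂ X₃ : Finset V} (z zb y yb : V)
    (hz : z ∈ X₁) (hzb : zb ∈ X₂) (hy : y ∈ X₂) (hyb : yb ∈ X₃)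
    (d12 : Disjoint (X₁.erase z) (X₂.erase zb))
    (hyA : y ∈ X₁.erase z ∪ X₂.erase zb)
    (dA3 : Disjoint ((X₁.erase z ∪ X₂.erase zb).erase y) (X₃.erase yb))
    (d23 : Disjoint (X₂.erase y) (X₃.erase yb))
    (hzbC : zb ∈ X₂.erase y ∪ X₃.erase yb)
    (d1C : Disjoint (X₁.erase z) ((X₂.erase y ∪ X₃.erase yb).erase zb))
    (hzbC' : zb ∈ X₃.erase yb ∪ X₂.erase y)
    (dC'1 : Disjoint ((X₃.erase yb ∪ X₂.erase y).erase zb) (X₁.erase z))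
    (hyA' : y ∈ X₂.erase zb ∪ X₁.erase z)
    (dA3' : Disjoint (X₃.erase yb) ((X₂.erase zb ∪ X₁.erase z).erase y))
    (f₁ f₁' : C.Ob X₁) (f₂ f₂' : C.Ob X₂) (f₃ f₃' : C.Ob X₃)
    (κ₁ : C.Hom f₁ f₁') (κ₂ : C.Hom f₂ f₂') (κ₃ : C.Hom f₃ f₃') :
    C.vcomp
      (C.betInv yb y zb z hyb hy hzb hz d23.symm hzbC' dC'1 d12.symm hyA' dA3' f₃' f₂' f₁')
      (C.vcomp
        (C.pcH yb y hyb hyb hyA' hyA' dA3' dA3' κ₃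
          (C.pcH zb z hzb hzb hz hz d12.symm d12.symm κ₂ κ₁))
        (C.vcomp
          (C.pcH yb y hyb hyb hyA hyA' dA3.symm dA3'
            (C.vid f₃) (C.gam z zb hz hzb d12 f₁ f₂))
          (C.gam y yb hyA hyb dA3 (C.pc z zb hz hzb d12 f₁ f₂) f₃)))
    = C.vcomp
        (C.pcH zb z hzbC' hzbC' hz hz dC'1 dC'1
          (C.pcH yb y hyb hyb hy hy d23.symm d23.symm κ₃ κ₂) κ₁)
        (C.vcomp
          (C.pcH zb z hzbC hzbC' hz hz d1C.symm dC'1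
            (C.gam y yb hy hyb d23 f₂ f₃) (C.vid f₁))
          (C.vcomp
            (C.gam z zb hz hzbC d1C f₁ (C.pc y yb hy hyb d23 f₂ f₃))
            (C.bet z zb y yb hz hzb hy hyb d12 hyA dA3 d23 hzbC d1C f₁ f₂ f₃))) := by
  -- (βγ-hexagon), restated with proof-irrelevant arguments adjusted
  have hhex :
      C.vcomp (C.bet yb y zb z hyb hy hzb hz d23.symm hzbC' dC'1 d12.symm hyA' dA3' f₃ f₂ f₁)
        (C.vcomp (C.pcH zb z hzbC hzbC' hz hz d1C.symm dC'1 (C.gam y yb hy hyb d23 f₂ f₃) (C.vid f₁))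
          (C.vcomp (C.gam z zb hz hzbC d1C f₁ (C.pc y yb hy hyb d23 f₂ f₃))
            (C.bet z zb y yb hz hzb hy hyb d12 hyA dA3 d23 hzbC d1C f₁ f₂ f₃)))
      = C.vcomp (C.gam y yb hyA' hyb dA3'.symm (C.pc zb z hzb hz d12.symm f₂ f₁) f₃)
          (C.pcH y yb hyA hyA' hyb hyb dA3 dA3'.symm (C.gam z zb hz hzb d12 f₁ f₂) (C.vid f₃)) :=
    C.hexagon z zb y yb hz hzb hy hyb d12 d23 hyA dA3 hzbC d1C hyA' dA3'.symm hzbC' dC'1 f₁ f₂ f₃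
  -- naturality of γ
  have hnat :
      C.vcomp (C.gam y yb hyA' hyb dA3'.symm (C.pc zb z hzb hz d12.symm f₂ f₁) f₃)
        (C.pcH y yb hyA hyA' hyb hyb dA3 dA3'.symm (C.gam z zb hz hzb d12 f₁ f₂) (C.vid f₃))
      = C.vcomp (C.pcH yb y hyb hyb hyA hyA' dA3.symm dA3' (C.vid f₃) (C.gam z zb hz hzb d12 f₁ f₂))
          (C.gam y yb hyA hyb dA3 (C.pc z zb hz hzb d12 f₁ f₂) f₃) :=
    C.gam_natural y yb hyA hyA' hyb hyb dA3 dA3'.symm (C.gam z zb hz hzb d12 f₁ f₂) (C.vid f₃)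
  -- naturality of β
  have hbn :=
    C.bet_natural yb y zb z hyb hyb hy hy hzb hzb hz hz d23.symm d23.symm hzbC' hzbC'
      dC'1 dC'1 d12.symm d12.symm hyA' hyA' dA3' dA3' κ₃ κ₂ κ₁
  -- naturality of β⁻¹
  have hbinv :
      C.vcomp
        (C.betInv yb y zb z hyb hy hzb hz d23.symm hzbC' dC'1 d12.symm hyA' dA3' f₃' f₂' f₁')
        (C.pcH yb y hyb hyb hyA' hyA' dA3' dA3' κ₃
          (C.pcH zb z hzb hzb hz hz d12.symm d12.symm κ₂ κ₁))
      = C.vcomp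
          (C.pcH zb z hzbC' hzbC' hz hz dC'1 dC'1
            (C.pcH yb y hyb hyb hy hy d23.symm d23.symm κ₃ κ₂) κ₁)
          (C.betInv yb y zb z hyb hy hzb hz d23.symm hzbC' dC'1 d12.symm hyA' dA3' f₃ f₂ f₁) := by
    conv_lhs =>
      rw [← C.vcomp_vid (C.pcH yb y hyb hyb hyA' hyA' dA3' dA3' κ₃
            (C.pcH zb z hzb hzb hz hz d12.symm d12.symm κ₂ κ₁)),
        ← C.bet_betInv yb y zb z hyb hy hzb hz d23.symm hzbC' dC'1 d12.symm hyA' dA3' f₃ f₂ f₁,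
        ← C.vcomp_assoc _ (C.bet yb y zb z hyb hy hzb hz d23.symm hzbC' dC'1 d12.symm hyA' dA3' f₃ f₂ f₁),
        ← hbn, ← C.vcomp_assoc, ← C.vcomp_assoc,
        C.betInv_bet, C.vid_vcomp]
  -- key cancellation
  have key :
      C.vcomp
        (C.betInv yb y zb z hyb hy hzb hz d23.symm hzbC' dC'1 d12.symm hyA' dA3' f₃ f₂ f₁)
        (C.vcomp
          (C.pcH yb y hyb hyb hyA hyA' dA3.symm dA3' (C.vid f₃) (C.gam z zb hz hzb d12 f₁ f₂))
          (C.gam y yb hyA hyb dA3 (C.pc z zb hz hzb d12 f₁ f₂) f₃))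
      = C.vcomp (C.pcH zb z hzbC hzbC' hz hz d1C.symm dC'1 (C.gam y yb hy hyb d23 f₂ f₃) (C.vid f₁))
          (C.vcomp (C.gam z zb hz hzbC d1C f₁ (C.pc y yb hy hyb d23 f₂ f₃))
            (C.bet z zb y yb hz hzb hy hyb d12 hyA dA3 d23 hzbC d1C f₁ f₂ f₃)) := by
    rw [← hnat, ← hhex, ← C.vcomp_assoc, C.betInv_bet, C.vid_vcomp]
  rw [← C.vcomp_assoc, hbinv, C.vcomp_assoc, key]

end CatCyclicOperad
end
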